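/- arXiv:2310.16555 — 6 statements merged into one kernel-verified Lean document; each statement's English description precedes it below -/
import Mathlib

section
/- Assume p(X,Y) is fully supported and p(Y) is the uniform distribution on Y. Let κ be any solution to the Intertwining Information Bottleneck problem with parameter λ = I(X;Y). Then a pair (σ,τ) of bijections of X and Y is an equivariance of p(Y|X) if and only if κ∘(σ⊗τ) = κ, where σ⊗τ denotes the deterministic channel on X×Y sending (x,y) to (σ(x),τ(y)). -/
noncomputable section

/-- `p` is a probability distribution on the finite set `X × Y`. -/
def IsJointDist {X Y : Type} [Fintype X] [Fintype Y] (p : X → Y → ℝ) : Prop :=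
  (∀ x y, 0 ≤ p x y) ∧ (∑ x, ∑ y, p x y) = 1

/-- Marginal distribution `p(X)`. -/
def margX {X Y : Type} [Fintype Y] (p : X → Y → ℝ) (x : X) : ℝ := ∑ y, p x y

/-- Marginal distribution `p(Y)`. -/
def margY {X Y : Type} [Fintype X] (p : X → Y → ℝ) (y : Y) : ℝ := ∑ x, p x y

/-- Mutual information `I(X;Y) = D(p(X,Y) ‖ p(X)p(Y))`. -/
def miXY {X Y : Type} [Fintype X] [Fintype Y] (p : X → Y → ℝ) : ℝ :=
  ∑ x, ∑ y, p x y * Real.log (p x y / (margX p x * margY p y))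

/-- A channel from `A` to the countable bottleneck space `T := ℕ`. -/
def IsChannelNat {A : Type} (κ : A → ℕ → ℝ) : Prop :=
  (∀ a t, 0 ≤ κ a t) ∧ ∀ a, (∑' t, κ a t) = 1

/-- Pushforward of the distribution `w` on `A` through the channel `κ`. -/
def pushNat {A : Type} [Fintype A] (w : A → ℝ) (κ : A → ℕ → ℝ) (t : ℕ) : ℝ :=
  ∑ a, w a * κ a t

/-- Kullback–Leibler divergence between distributions on `ℕ`. -/
def klNat (u v : ℕ → ℝ) : ℝ := ∑' t, u t * Real.log (u t / v t)

/-- Mutual information between the input (distributed as `w`) and the output of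
the channel `κ`, computed from the joint distribution `w(a) κ(t|a)`. -/
def miNat {A : Type} [Fintype A] (w : A → ℝ) (κ : A → ℕ → ℝ) : ℝ :=
  ∑ a, ∑' t, w a * κ a t * Real.log (κ a t / pushNat w κ t)

/-- The joint distribution `p(X,Y)` as a weight on `X × Y`. -/
def jointW {X Y : Type} (p : X → Y → ℝ) : X × Y → ℝ := fun a => p a.1 a.2

/-- The product of the marginals `p(X)p(Y)` as a weight on `X × Y`. -/
def splitW {X Y : Type} [Fintype X] [Fintype Y] (p : X → Y → ℝ) : X × Y → ℝ :=
  fun a => margX p a.1 * margY p a.2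

/-- `κ` solves the Intertwining Information Bottleneck problem with parameter `lam`:
it is a channel satisfying the constraint `D(κ(p(X,Y)) ‖ κ(p(X)p(Y))) = lam` and it
minimises `I_κ(X,Y;T)` among all channels satisfying this constraint. -/
def SolvesIIB {X Y : Type} [Fintype X] [Fintype Y] (p : X → Y → ℝ)
    (κ : X × Y → ℕ → ℝ) (lam : ℝ) : Prop :=
  IsChannelNat κ ∧
  klNat (pushNat (jointW p) κ) (pushNat (splitW p) κ) = lam ∧
  ∀ κ' : X × Y → ℕ → ℝ, IsChannelNat κ' →
    klNat (pushNat (jointW p) κ') (pushNat (splitW p) κ') = lam →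
    miNat (jointW p) κ ≤ miNat (jointW p) κ'

/-- The ratio `p(x,y)/(p(x)p(y))` whose level sets define the equivalence relation `∼`. -/
def ratio {X Y : Type} [Fintype X] [Fintype Y] (p : X → Y → ℝ) (a : X × Y) : ℝ :=
  p a.1 a.2 / (margX p a.1 * margY p a.2)

/-- A channel `γ` is congruent if distinct inputs have disjoint output supports. -/
def IsCongruentNat {A : Type} (γ : A → ℕ → ℝ) : Prop :=
  ∀ a a', a ≠ a' → Disjoint (Function.support (γ a)) (Function.support (γ a'))

/-!
Put `f = p(X,Y)` and `q = p(X)p(Y)` on `X × Y`. By the log-sum inequality at each output `t`,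
`D(κf ‖ κq) ≤ D(f ‖ q) = I(X;Y)`, with equality only if all inputs `a` charged by `κ` at `t`
share the ratio `f a / q a`. Conversely a minimiser never separates two inputs with the same
ratio: replacing both rows by their `f`-weighted average keeps both pushforwards, hence the
constraint, and strictly lowers `I_κ(X,Y;T)` by strict convexity of `x log x`. So the rows of `κ`
at `a` and `a'` agree iff the ratios do, and when `p(Y)` is uniform, equality of the ratios at
`(σ x, τ y)` and `(x, y)` is exactly the equivariance condition.
-/

open Real Finset

lemma abs_mul_log_div_le {x y C : ℝ} (hx : 0 ≤ x) (hy : 0 ≤ y) (h : x ≤ C * y) :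
    |x * log (x / y)| ≤ y + x * |log C| := by
  rcases hx.eq_or_lt with rfl | hx
  · simpa using hy
  have hy : 0 < y := hy.lt_of_ne <| by rintro rfl; simp at h; linarith
  have hxy : 0 < x / y := div_pos hx hy
  have hlower : x - y ≤ x * log (x / y) := by
    have := one_sub_inv_le_log_of_pos hxy
    rw [inv_div] at this
    calc x - y = x * (1 - y / x) := by field_simp
      _ ≤ x * log (x / y) := by gcongr
  have hupper : x * log (x / y) ≤ x * |log C| := by
    gcongr
    exact (log_le_log hxy ((div_le_iff₀ hy).2 h)).trans (le_abs_self _)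
  rw [abs_le]
  constructor <;> nlinarith [mul_nonneg hx.le (abs_nonneg (log C))]

lemma summable_mul_log_div {ι : Type*} {u v : ι → ℝ} (hu : ∀ i, 0 ≤ u i) (hv : ∀ i, 0 ≤ v i)
    (hsu : Summable u) (hsv : Summable v) {C : ℝ} (h : ∀ i, u i ≤ C * v i) :
    Summable fun i => u i * log (u i / v i) :=
  (hsv.add (hsu.mul_right |log C|)).of_norm_bounded fun i => abs_mul_log_div_le (hu i) (hv i) (h i)

lemma mul_log_div_average_lt {a b x y P : ℝ} (ha : 0 < a) (hb : 0 < b) (hx : 0 ≤ x) (hy : 0 ≤ y)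
    (hP : 0 < P) (hxy : x ≠ y) :
    (a + b) * ((a * x + b * y) / (a + b) * log ((a * x + b * y) / (a + b) / P)) <
      a * (x * log (x / P)) + b * (y * log (y / P)) := by
  have hab : 0 < a + b := add_pos ha hb
  have h := strictConvexOn_mul_log.2 (x := x / P) (y := y / P) (div_nonneg hx hP.le)
    (div_nonneg hy hP.le) (fun h => hxy (by field_simp at h; exact h))
    (div_pos ha hab) (div_pos hb hab) (by field_simp)
  have e : a / (a + b) * (x / P) + b / (a + b) * (y / P) = (a * x + b * y) / (a + b) / P := by
    field_simp
  simp only [smul_eq_mul, e] at h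
  calc (a + b) * ((a * x + b * y) / (a + b) * log ((a * x + b * y) / (a + b) / P))
      = (a + b) * P * ((a * x + b * y) / (a + b) / P * log ((a * x + b * y) / (a + b) / P)) := by
        field_simp
    _ < (a + b) * P * (a / (a + b) * (x / P * log (x / P)) + b / (a + b) * (y / P * log (y / P))) :=
        mul_lt_mul_of_pos_left h (mul_pos hab hP)
    _ = a * (x * log (x / P)) + b * (y * log (y / P)) := by field_simp

lemma mul_log_div_sum_le_sum_mul_mul_log {ι : Type*} [Fintype ι] {v r : ι → ℝ}
    (hv : ∀ i, 0 ≤ v i) (hr : ∀ i, 0 ≤ r i) :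
    (∑ i, v i * r i) * log ((∑ i, v i * r i) / ∑ i, v i) ≤ ∑ i, v i * (r i * log (r i)) := by
  rcases (sum_nonneg fun i _ => hv i).eq_or_lt with hV | hV
  · have hv0 : ∀ i, v i = 0 := fun i =>
      (sum_eq_zero_iff_of_nonneg fun i _ => hv i).1 hV.symm i (mem_univ i)
    simp [hv0]
  have h := convexOn_mul_log.map_sum_le (t := univ) (w := fun i => v i / ∑ j, v j) (p := r)
    (fun i _ => div_nonneg (hv i) hV.le) (by rw [← sum_div, div_self hV.ne'])
    (fun i _ => hr i)
  simp only [smul_eq_mul, div_mul_eq_mul_div, ← sum_div] at h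
  rwa [div_le_div_iff_of_pos_right hV] at h

lemma eq_of_mul_log_div_sum_eq_sum_mul_mul_log {ι : Type*} [Fintype ι] {v r : ι → ℝ}
    (hv : ∀ i, 0 ≤ v i) (hr : ∀ i, 0 ≤ r i)
    (h : (∑ i, v i * r i) * log ((∑ i, v i * r i) / ∑ i, v i) = ∑ i, v i * (r i * log (r i)))
    {i j : ι} (hi : v i ≠ 0) (hj : v j ≠ 0) : r i = r j := by
  have hV : 0 < ∑ k, v k :=
    ((hv i).lt_of_ne' hi).trans_le (single_le_sum (fun k _ => hv k) (mem_univ i))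
  refine (strictConvexOn_mul_log.map_sum_eq_iff_of_nonneg (t := univ)
    (w := fun k => v k / ∑ l, v l) (p := r) (fun k _ => div_nonneg (hv k) hV.le)
    (by rw [← sum_div, div_self hV.ne']) (fun k _ => hr k)).1 ?_
    (mem_univ i) (div_ne_zero hi hV.ne') (mem_univ j) (div_ne_zero hj hV.ne')
  simp only [smul_eq_mul, div_mul_eq_mul_div, ← sum_div]
  rw [h]

namespace IsChannelNat

variable {A : Type} {κ : A → ℕ → ℝ}

lemma summable (hκ : IsChannelNat κ) (a : A) : Summable (κ a) := by
  by_contra h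
  simpa [tsum_eq_zero_of_not_summable h] using hκ.2 a

lemma exists_ne_zero (hκ : IsChannelNat κ) (a : A) : ∃ t, κ a t ≠ 0 := by
  by_contra! h
  simpa [h] using hκ.2 a

end IsChannelNat

section Pushforward

variable {A : Type} [Fintype A] {w : A → ℝ} {κ : A → ℕ → ℝ}

lemma pushNat_nonneg (hw : ∀ a, 0 ≤ w a) (hκ : ∀ a t, 0 ≤ κ a t) (t : ℕ) :
    0 ≤ pushNat w κ t :=
  sum_nonneg fun a _ => mul_nonneg (hw a) (hκ a t)

lemma mul_le_pushNat (hw : ∀ a, 0 ≤ w a) (hκ : ∀ a t, 0 ≤ κ a t) (a : A) (t : ℕ) :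
    w a * κ a t ≤ pushNat w κ t :=
  single_le_sum (fun b _ => mul_nonneg (hw b) (hκ b t)) (mem_univ a)

lemma pushNat_le_mul_pushNat {w' : A → ℝ} {C : ℝ} (h : ∀ a, w a ≤ C * w' a)
    (hκ : ∀ a t, 0 ≤ κ a t) (t : ℕ) : pushNat w κ t ≤ C * pushNat w' κ t := by
  rw [pushNat, pushNat, mul_sum]
  exact sum_le_sum fun a _ => by nlinarith [h a, hκ a t]

lemma summable_pushNat (hκ : IsChannelNat κ) : Summable (pushNat w κ) :=
  summable_sum fun a _ => (hκ.summable a).mul_left (w a)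

lemma summable_mul_log_div_pushNat (hw : ∀ b, 0 ≤ w b) {a : A} (ha : 0 < w a)
    (hκ : IsChannelNat κ) : Summable fun t => κ a t * log (κ a t / pushNat w κ t) :=
  summable_mul_log_div (hκ.1 a) (pushNat_nonneg hw hκ.1) (hκ.summable a) (summable_pushNat hκ)
    (C := (w a)⁻¹) fun t => by
      rw [inv_mul_eq_div, le_div_iff₀' ha]
      exact mul_le_pushNat hw hκ.1 a t

lemma miNat_eq_sum_mul_tsum (w : A → ℝ) (κ : A → ℕ → ℝ) :
    miNat w κ = ∑ a, w a * ∑' t, κ a t * log (κ a t / pushNat w κ t) := by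
  simp only [miNat, ← tsum_mul_left, mul_assoc]

end Pushforward

section DataProcessing

variable {A : Type} [Fintype A] {f q : A → ℝ} {κ : A → ℕ → ℝ}

theorem div_eq_div_of_klNat_pushNat_eq (hf : ∀ a, 0 ≤ f a) (hq : ∀ a, 0 < q a)
    (hκ : IsChannelNat κ)
    (h : klNat (pushNat f κ) (pushNat q κ) = ∑ a, f a * log (f a / q a))
    {t : ℕ} {a a' : A} (ha : κ a t ≠ 0) (ha' : κ a' t ≠ 0) : f a / q a = f a' / q a' := by
  set D := ∑ a, f a * log (f a / q a)
  set g : ℕ → ℝ := fun t => ∑ a, f a * log (f a / q a) * κ a t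
  set k : ℕ → ℝ := fun t => pushNat f κ t * log (pushNat f κ t / pushNat q κ t)
  -- The log-sum inequality at `t`, with weights `q a * κ a t` at the points `f a / q a`.
  have hsum_mul : ∀ t, ∑ a, q a * κ a t * (f a / q a) = pushNat f κ t := fun t =>
    sum_congr rfl fun a _ => by field_simp [(hq a).ne']
  have hsum_mul_log : ∀ t, ∑ a, q a * κ a t * (f a / q a * log (f a / q a)) = g t := fun t =>
    sum_congr rfl fun a _ => by field_simp [(hq a).ne']
  have hv : ∀ t a, 0 ≤ q a * κ a t := fun t a => mul_nonneg (hq a).le (hκ.1 a t)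
  have hr : ∀ a, 0 ≤ f a / q a := fun a => div_nonneg (hf a) (hq a).le
  have hle : ∀ t, k t ≤ g t := fun t => by
    have := mul_log_div_sum_le_sum_mul_mul_log (hv t) hr
    rwa [hsum_mul, hsum_mul_log] at this
  have hg : HasSum g D := by
    simpa [hκ.2] using hasSum_sum fun a _ =>
      (hκ.summable a).hasSum.mul_left (f a * log (f a / q a))
  have hk : HasSum k D := by
    have hC : ∀ a, f a ≤ (∑ b, f b / q b) * q a := fun a =>
      (div_le_iff₀ (hq a)).1 (single_le_sum (fun b _ => hr b) (mem_univ a))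
    refine h ▸ (summable_mul_log_div (pushNat_nonneg hf hκ.1)
      (pushNat_nonneg (fun a => (hq a).le) hκ.1) (summable_pushNat hκ) (summable_pushNat hκ)
      (pushNat_le_mul_pushNat hC hκ.1)).hasSum
  have hgap : g - k = 0 :=
    (hasSum_zero_iff_of_nonneg fun t => sub_nonneg.2 (hle t)).1 (by simpa using hg.sub hk)
  refine eq_of_mul_log_div_sum_eq_sum_mul_mul_log (hv t) hr ?_
    (mul_ne_zero (hq a).ne' ha) (mul_ne_zero (hq a').ne' ha')
  rw [hsum_mul, hsum_mul_log]
  exact (sub_eq_zero.1 (congrFun hgap t)).symm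

end DataProcessing

section MergeRows

variable {A : Type} [DecidableEq A] {w : A → ℝ} {κ : A → ℕ → ℝ} {a₀ a₁ : A}

def mergeRows (w : A → ℝ) (κ : A → ℕ → ℝ) (a₀ a₁ : A) : A → ℕ → ℝ :=
  fun a t => if a = a₀ ∨ a = a₁ then (w a₀ * κ a₀ t + w a₁ * κ a₁ t) / (w a₀ + w a₁) else κ a t

lemma mergeRows_of_ne {a : A} (ha : a ≠ a₀ ∧ a ≠ a₁) : mergeRows w κ a₀ a₁ a = κ a :=
  funext fun _ => if_neg (not_or.2 ha)

lemma mergeRows_left :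
    mergeRows w κ a₀ a₁ a₀ = fun t => (w a₀ * κ a₀ t + w a₁ * κ a₁ t) / (w a₀ + w a₁) :=
  funext fun _ => if_pos (Or.inl rfl)

lemma mergeRows_right :
    mergeRows w κ a₀ a₁ a₁ = fun t => (w a₀ * κ a₀ t + w a₁ * κ a₁ t) / (w a₀ + w a₁) :=
  funext fun _ => if_pos (Or.inr rfl)

lemma isChannelNat_mergeRows (hκ : IsChannelNat κ) (h₀ : 0 ≤ w a₀) (h₁ : 0 ≤ w a₁)
    (hW : 0 < w a₀ + w a₁) : IsChannelNat (mergeRows w κ a₀ a₁) := by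
  refine ⟨fun a t => ?_, fun a => ?_⟩ <;> unfold mergeRows <;> split_ifs
  · have := hκ.1 a₀ t; have := hκ.1 a₁ t; positivity
  · exact hκ.1 a t
  · rw [tsum_div_const, ((hκ.summable a₀).mul_left _).tsum_add ((hκ.summable a₁).mul_left _),
      tsum_mul_left, tsum_mul_left, hκ.2, hκ.2, mul_one, mul_one, div_self hW.ne']
  · exact hκ.2 a

variable [Fintype A]

lemma pushNat_mergeRows (hne : a₀ ≠ a₁) (hW : w a₀ + w a₁ ≠ 0) {w' : A → ℝ}
    (hw' : w' a₀ * w a₁ = w' a₁ * w a₀) : pushNat w' (mergeRows w κ a₀ a₁) = pushNat w' κ := by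
  funext t
  rw [← sub_eq_zero, pushNat, pushNat, ← sum_sub_distrib,
    Fintype.sum_eq_add a₀ a₁ hne fun a ha => by rw [mergeRows_of_ne ha, sub_self]]
  rw [mergeRows_left, mergeRows_right]
  field_simp
  linear_combination (κ a₁ t - κ a₀ t) * hw'

lemma miNat_mergeRows_lt (hw : ∀ a, 0 < w a) (hκ : IsChannelNat κ) (hne : a₀ ≠ a₁) {t₀ : ℕ}
    (ht₀ : κ a₀ t₀ ≠ κ a₁ t₀) : miNat w (mergeRows w κ a₀ a₁) < miNat w κ := by
  set κ' := mergeRows w κ a₀ a₁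
  set P := pushNat w κ
  set m : ℕ → ℝ := fun t => (w a₀ * κ a₀ t + w a₁ * κ a₁ t) / (w a₀ + w a₁)
  set R : (ℕ → ℝ) → ℝ := fun k => ∑' t, k t * log (k t / P t)
  have hW : 0 < w a₀ + w a₁ := add_pos (hw a₀) (hw a₁)
  have hw0 : ∀ a, 0 ≤ w a := fun a => (hw a).le
  have hκ' : IsChannelNat κ' := isChannelNat_mergeRows hκ (hw0 a₀) (hw0 a₁) hW
  have hκ'_of_ne : ∀ a, a ≠ a₀ ∧ a ≠ a₁ → κ' a = κ a := fun a ha => mergeRows_of_ne ha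
  have hP : pushNat w κ' = P := pushNat_mergeRows hne hW.ne' (mul_comm _ _)
  have hκ'₀ : κ' a₀ = m := mergeRows_left
  have hκ'₁ : κ' a₁ = m := mergeRows_right
  have hdiff : miNat w κ - miNat w κ' =
      w a₀ * R (κ a₀) + w a₁ * R (κ a₁) - (w a₀ + w a₁) * R m := by
    rw [miNat_eq_sum_mul_tsum, miNat_eq_sum_mul_tsum, hP, ← sum_sub_distrib,
      Fintype.sum_eq_add a₀ a₁ hne fun a ha => by rw [hκ'_of_ne a ha, sub_self], hκ'₀, hκ'₁]
    ring
  have hPpos : ∀ t, κ a₀ t ≠ κ a₁ t → 0 < P t := fun t ht => by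
    rcases (hκ.1 a₀ t).eq_or_lt with h | h
    · rw [← h] at ht
      exact (mul_pos (hw a₁) ((hκ.1 a₁ t).lt_of_ne ht)).trans_le (mul_le_pushNat hw0 hκ.1 a₁ t)
    · exact (mul_pos (hw a₀) h).trans_le (mul_le_pushNat hw0 hκ.1 a₀ t)
  have hlt : ∀ t, κ a₀ t ≠ κ a₁ t → (w a₀ + w a₁) * (m t * log (m t / P t)) <
      w a₀ * (κ a₀ t * log (κ a₀ t / P t)) + w a₁ * (κ a₁ t * log (κ a₁ t / P t)) := fun t ht =>
    mul_log_div_average_lt (hw a₀) (hw a₁) (hκ.1 a₀ t) (hκ.1 a₁ t) (hPpos t ht) ht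
  have hle : ∀ t, (w a₀ + w a₁) * (m t * log (m t / P t)) ≤
      w a₀ * (κ a₀ t * log (κ a₀ t / P t)) + w a₁ * (κ a₁ t * log (κ a₁ t / P t)) := fun t => by
    by_cases ht : κ a₀ t = κ a₁ t
    · have hm : m t = κ a₀ t := by simp only [m, ← ht]; field_simp
      rw [hm, ← ht, add_mul]
    · exact (hlt t ht).le
  have hsm : Summable fun t => m t * log (m t / P t) := by
    have h := summable_mul_log_div_pushNat (a := a₀) hw0 (hw a₀) hκ'
    rwa [hκ'₀, hP] at h
  have hR : (w a₀ + w a₁) * R m < w a₀ * R (κ a₀) + w a₁ * R (κ a₁) := by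
    simp only [R, ← tsum_mul_left]
    rw [← Summable.tsum_add]
    · exact Summable.tsum_lt_tsum hle (hlt t₀ ht₀) (hsm.mul_left _)
        (((summable_mul_log_div_pushNat hw0 (hw a₀) hκ).mul_left _).add
          ((summable_mul_log_div_pushNat hw0 (hw a₁) hκ).mul_left _))
    · exact (summable_mul_log_div_pushNat hw0 (hw a₀) hκ).mul_left _
    · exact (summable_mul_log_div_pushNat hw0 (hw a₁) hκ).mul_left _
  linarith

end MergeRows

theorem eq_of_div_eq_of_forall_miNat_le {A : Type} [Fintype A] {f q : A → ℝ} {κ : A → ℕ → ℝ}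
    {a₀ a₁ : A} (hf : ∀ a, 0 < f a) (hq : ∀ a, 0 < q a) (hκ : IsChannelNat κ)
    (hmin : ∀ κ', IsChannelNat κ' → pushNat f κ' = pushNat f κ → pushNat q κ' = pushNat q κ →
      miNat f κ ≤ miNat f κ')
    (hr : f a₀ / q a₀ = f a₁ / q a₁) : κ a₀ = κ a₁ := by
  classical
  by_contra hne
  obtain ⟨t₀, ht₀⟩ := Function.ne_iff.1 hne
  have ha : a₀ ≠ a₁ := fun h => hne (h ▸ rfl)
  have hW : 0 < f a₀ + f a₁ := add_pos (hf a₀) (hf a₁)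
  have hcross : q a₀ * f a₁ = q a₁ * f a₀ := by
    rw [div_eq_div_iff (hq a₀).ne' (hq a₁).ne'] at hr
    linear_combination -hr
  exact (hmin _ (isChannelNat_mergeRows hκ (hf a₀).le (hf a₁).le hW)
    (pushNat_mergeRows ha hW.ne' (mul_comm _ _)) (pushNat_mergeRows ha hW.ne' hcross)).not_gt
    (miNat_mergeRows_lt hf hκ ha ht₀)

section JointDistribution

variable {X Y : Type} {p : X → Y → ℝ}

lemma jointW_pos (hp : ∀ x y, 0 < p x y) (a : X × Y) : 0 < jointW p a :=
  hp a.1 a.2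

variable [Fintype X] [Fintype Y]

lemma splitW_pos (hp : ∀ x y, 0 < p x y) (a : X × Y) : 0 < splitW p a :=
  mul_pos (sum_pos (fun y _ => hp a.1 y) ⟨a.2, mem_univ _⟩)
    (sum_pos (fun x _ => hp x a.2) ⟨a.1, mem_univ _⟩)

lemma miXY_eq_sum_jointW_mul_log (p : X → Y → ℝ) :
    miXY p = ∑ a : X × Y, jointW p a * log (jointW p a / splitW p a) := by
  rw [miXY, Fintype.sum_prod_type]
  rfl

lemma ratio_eq_ratio_iff {x x' : X} {y y' : Y} (hy : margY p y' = margY p y)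
    (hy₀ : margY p y ≠ 0) :
    ratio p (x', y') = ratio p (x, y) ↔ p x' y' / margX p x' = p x y / margX p x := by
  simp only [ratio, ← div_div, hy]
  exact div_left_inj' hy₀

end JointDistribution

/-- Assume `p(X,Y)` is fully supported and `p(Y)` is uniform on `Y`.
Let `κ` solve the Intertwining Information Bottleneck problem with parameter
`λ = I(X;Y)`. Then a pair `(σ,τ)` of bijections of `X` and `Y` is an equivariance of
the conditional channel `p(Y|X)` (i.e. `p(τ y | σ x) = p(y|x)` for all `x,y`, where
`p(y|x) = p(x,y)/p(x)`) if and only if `κ ∘ (σ ⊗ τ) = κ`, where `σ ⊗ τ` is the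
deterministic channel `(x,y) ↦ (σ x, τ y)`. -/
theorem iib_characterises_equivariances {X Y : Type} [Fintype X] [Fintype Y]
    (p : X → Y → ℝ) (hp : IsJointDist p)
    (hfull : ∀ x y, p x y ≠ 0)
    (hunif : ∀ y : Y, margY p y = (Fintype.card Y : ℝ)⁻¹)
    (κ : X × Y → ℕ → ℝ) (hκ : SolvesIIB p κ (miXY p))
    (σ : Equiv.Perm X) (τ : Equiv.Perm Y) :
    (∀ x y, p (σ x) (τ y) / margX p (σ x) = p x y / margX p x) ↔
      (∀ (a : X × Y) (t : ℕ), κ (σ a.1, τ a.2) t = κ a t) := by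
  obtain ⟨hκ, hcon, hmin⟩ := hκ
  have hpos : ∀ x y, 0 < p x y := fun x y => (hp.1 x y).lt_of_ne' (hfull x y)
  have hf := jointW_pos hpos
  have hq := splitW_pos hpos
  have hequiv : ∀ x y, ratio p (σ x, τ y) = ratio p (x, y) ↔
      p (σ x) (τ y) / margX p (σ x) = p x y / margX p x := fun x y =>
    have : Nonempty Y := ⟨y⟩
    ratio_eq_ratio_iff (by rw [hunif, hunif]) (by rw [hunif]; positivity)
  simp only [← hequiv]
  constructor
  · intro h a t
    exact congrFun (eq_of_div_eq_of_forall_miNat_le hf hq hκ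
      (fun κ' hκ' hf' hq' => hmin κ' hκ' (by rw [hf', hq', hcon])) (h a.1 a.2)) t
  · intro h x y
    obtain ⟨t, ht⟩ := hκ.exists_ne_zero (x, y)
    exact div_eq_div_of_klNat_pushNat_eq (fun a => (hf a).le) hq hκ (hcon.trans (miXY_eq_sum_jointW_mul_log p))
      ((h (x, y) t).trans_ne ht) ht
end
end

section
/- Let C be a convex subset of a real topological vector space, let f and g be continuous real-valued functions on C with g convex and nonnegative, 0 in the image of g, and g⁻¹(0) ⊆ f⁻¹(0), and let λ ≥ 0. Then every minimiser v of g over the set {v ∈ C : f(v) ≥ λ} satisfies f(v) = λ. Consequently, if a minimiser of g over {v ∈ C : f(v) ≥ λ} exists, then the set of minimisers of g over {v ∈ C : f(v) ≥ λ} coincides with the set of minimisers of g over {v ∈ C : f(v) = λ}. -/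
/-! If `λ < f v` at a minimiser `v` of `g` over `{f ≥ λ}`, continuity of `f` makes `v` a local
minimiser of `g` on `C`, hence a global one by convexity. Then `g v ≤ 0`, so `g v = 0` and
`f v = 0 ≤ λ`, a contradiction. -/

open Set

theorem ConvexOn.isMinOn_of_isMinOn_superlevel_of_lt {V : Type*} [AddCommGroup V] [Module ℝ V]
    [TopologicalSpace V] [IsTopologicalAddGroup V] [ContinuousSMul ℝ V]
    {C : Set V} {f g : V → ℝ} {lam : ℝ} {v : V} (hg : ConvexOn ℝ C g)
    (hf : ContinuousWithinAt f C v) (hv : v ∈ C) (hmin : IsMinOn g {w ∈ C | lam ≤ f w} v)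
    (hlt : lam < f v) : IsMinOn g C v := by
  have hlocal : IsLocalMinOn g C v := by
    filter_upwards [hf.eventually (lt_mem_nhds hlt), self_mem_nhdsWithin] with w hfw hw
    exact hmin ⟨hw, hfw.le⟩
  exact IsMinOn.of_isLocalMinOn_of_convexOn hv hlocal hg

theorem isMinOn_iff_of_subset {α β : Type*} [Preorder β] {g : α → β} {S T : Set α}
    (hTS : T ⊆ S) (hST : ∀ v ∈ S, IsMinOn g S v → v ∈ T) (hex : ∃ v ∈ S, IsMinOn g S v)
    (v : α) : v ∈ S ∧ IsMinOn g S v ↔ v ∈ T ∧ IsMinOn g T v := by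
  obtain ⟨u, hu, hminu⟩ := hex
  constructor
  · rintro ⟨hv, hminv⟩
    exact ⟨hST v hv hminv, hminv.on_subset hTS⟩
  · rintro ⟨hv, hminv⟩
    exact ⟨hTS hv, fun w hw => (hminv (hST u hu hminu)).trans (hminu hw)⟩

theorem constrained_minimisers_saturate_general {V : Type*} [AddCommGroup V] [Module ℝ V]
    [TopologicalSpace V] [IsTopologicalAddGroup V] [ContinuousSMul ℝ V]
    (C : Set V) (f g : V → ℝ)
    (hf : ContinuousOn f C)
    (hgconv : ConvexOn ℝ C g) (hgnn : ∀ v ∈ C, 0 ≤ g v)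
    (hg0 : ∃ v ∈ C, g v = 0)
    (hsub : ∀ v ∈ C, g v = 0 → f v = 0)
    (lam : ℝ) (hlam : 0 ≤ lam) :
    (∀ v ∈ C, lam ≤ f v → (∀ w ∈ C, lam ≤ f w → g v ≤ g w) → f v = lam) ∧
    ((∃ v, v ∈ C ∧ lam ≤ f v ∧ ∀ w ∈ C, lam ≤ f w → g v ≤ g w) →
      {v | v ∈ C ∧ lam ≤ f v ∧ ∀ w ∈ C, lam ≤ f w → g v ≤ g w} =
        {v | v ∈ C ∧ f v = lam ∧ ∀ w ∈ C, f w = lam → g v ≤ g w}) := by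
  obtain ⟨v₀, hv₀, hgv₀⟩ := hg0
  have saturate : ∀ v ∈ {w ∈ C | lam ≤ f w}, IsMinOn g {w ∈ C | lam ≤ f w} v →
      v ∈ {w ∈ C | f w = lam} := by
    rintro v ⟨hv, hfv⟩ hmin
    refine ⟨hv, (not_lt.mp fun hlt => ?_).antisymm hfv⟩
    have hglobal := hgconv.isMinOn_of_isMinOn_superlevel_of_lt (hf v hv) hv hmin hlt
    have hgv : g v = 0 := le_antisymm (hgv₀ ▸ hglobal hv₀) (hgnn v hv)
    linarith [hsub v hv hgv]
  have hTS : {w ∈ C | f w = lam} ⊆ {w ∈ C | lam ≤ f w} := fun w ⟨hw, hfw⟩ => ⟨hw, hfw.ge⟩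
  constructor
  · intro v hv hfv hmin
    exact (saturate v ⟨hv, hfv⟩ fun w hw => hmin w hw.1 hw.2).2
  · rintro ⟨u, hu, hfu, hminu⟩
    ext v
    have hiff :=
      isMinOn_iff_of_subset hTS saturate ⟨u, ⟨hu, hfu⟩, fun w hw => hminu w hw.1 hw.2⟩ v
    simpa only [isMinOn_iff, mem_ofPred_eq, and_imp, and_assoc] using hiff

/-- Let `C` be a convex subset of a real topological vector space,
`f, g` continuous real functions on `C` with `g` convex and nonnegative on `C`,
`0` in the image of `g` on `C`, `g⁻¹(0) ⊆ f⁻¹(0)`, and `λ ≥ 0`. Then every minimiser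
`v` of `g` over `{v ∈ C : f v ≥ λ}` satisfies `f v = λ`; consequently, if such a
minimiser exists, the minimisers of `g` over `{v ∈ C : f v ≥ λ}` are exactly the
minimisers of `g` over `{v ∈ C : f v = λ}`. -/
theorem constrained_minimisers_saturate {V : Type*} [AddCommGroup V] [Module ℝ V]
    [TopologicalSpace V] [IsTopologicalAddGroup V] [ContinuousSMul ℝ V]
    (C : Set V) (hC : Convex ℝ C) (f g : V → ℝ)
    (hf : ContinuousOn f C) (hg : ContinuousOn g C)
    (hgconv : ConvexOn ℝ C g) (hgnn : ∀ v ∈ C, 0 ≤ g v)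
    (hg0 : ∃ v ∈ C, g v = 0)
    (hsub : ∀ v ∈ C, g v = 0 → f v = 0)
    (lam : ℝ) (hlam : 0 ≤ lam) :
    (∀ v ∈ C, lam ≤ f v → (∀ w ∈ C, lam ≤ f w → g v ≤ g w) → f v = lam) ∧
    ((∃ v, v ∈ C ∧ lam ≤ f v ∧ ∀ w ∈ C, lam ≤ f w → g v ≤ g w) →
      {v | v ∈ C ∧ lam ≤ f v ∧ ∀ w ∈ C, lam ≤ f w → g v ≤ g w} =
        {v | v ∈ C ∧ f v = lam ∧ ∀ w ∈ C, f w = lam → g v ≤ g w}) :=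
  constrained_minimisers_saturate_general C f g hf hgconv hgnn hg0 hsub lam hlam
end

section
/- For every 0 ≤ λ ≤ I(X;Y), a channel of the form κ_X ⊗ e_Y (with κ_X a channel from X to T_ib) solves the problem of minimising I_κ(X,Y;T) over channels κ ∈ C_IB(X,Y) subject to D(κ(p(X,Y)) || κ(p(X)p(Y))) = λ, if and only if κ_X solves the Information Bottleneck problem: minimise I_q(X;T_ib) over channels q(T_ib|X) from X to T_ib subject to I_q(Y;T_ib) ≥ λ, where the joint distribution is q(x,y,t) = p(x,y) q(t|x). -/
noncomputable section

/-- The channel `κ_X ⊗ e_Y` from `X × Y` to `T_ib × Y`: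
`(κ_X ⊗ e_Y)(t,y'|x,y) = κ_X(t|x) δ_{y'=y}`. -/
def tensIdY {X Y : Type} [DecidableEq Y] (κX : X → ℕ → ℝ) : X × Y → ℕ × Y → ℝ :=
  fun a s => κX a.1 s.1 * (if s.2 = a.2 then 1 else 0)

/-- Pushforward of a weight `w` on `X × Y` through a channel to `T_ib × Y`. -/
def pushNY {X Y : Type} [Fintype X] [Fintype Y] (w : X × Y → ℝ)
    (κ : X × Y → ℕ × Y → ℝ) (s : ℕ × Y) : ℝ :=
  ∑ a : X × Y, w a * κ a s

/-- Kullback–Leibler divergence between distributions on `T_ib × Y`. -/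
def klNY {Y : Type} [Fintype Y] (u v : ℕ × Y → ℝ) : ℝ :=
  ∑' s : ℕ × Y, u s * Real.log (u s / v s)

/-- Mutual information `I_κ(X,Y;T)` between the input (distributed as `w`) and the
output of a channel `κ` from `X × Y` to `T_ib × Y`. -/
def miNY {X Y : Type} [Fintype X] [Fintype Y] (w : X × Y → ℝ)
    (κ : X × Y → ℕ × Y → ℝ) : ℝ :=
  ∑ a : X × Y, ∑' s : ℕ × Y, w a * κ a s * Real.log (κ a s / pushNY w κ s)

/-- Marginal `q(T_ib)` of the joint `q(x,t) = p(x) κ_X(t|x)`. -/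
def margTib {X Y : Type} [Fintype X] [Fintype Y] (p : X → Y → ℝ)
    (κX : X → ℕ → ℝ) (t : ℕ) : ℝ :=
  ∑ x, margX p x * κX x t

/-- Mutual information `I_q(X;T_ib)` for the joint `q(x,y,t) = p(x,y) κ_X(t|x)`. -/
def miXTib {X Y : Type} [Fintype X] [Fintype Y] (p : X → Y → ℝ)
    (κX : X → ℕ → ℝ) : ℝ :=
  ∑ x, ∑' t, margX p x * κX x t * Real.log (κX x t / margTib p κX t)

/-- Mutual information `I_q(Y;T_ib)` for the joint `q(x,y,t) = p(x,y) κ_X(t|x)`. -/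
def miYTib {X Y : Type} [Fintype X] [Fintype Y] (p : X → Y → ℝ)
    (κX : X → ℕ → ℝ) : ℝ :=
  ∑ y, ∑' t, (∑ x, p x y * κX x t) *
    Real.log ((∑ x, p x y * κX x t) / (margY p y * margTib p κX t))

set_option linter.unusedSectionVars false
set_option linter.unusedVariables false
set_option maxHeartbeats 1000000


/-- Gibbs lower bound: `a - b ≤ a log(a/b)`. -/
lemma mul_log_div_ge {a b : ℝ} (ha : 0 ≤ a) (hb : 0 ≤ b) (hab : b = 0 → a = 0) :
    a - b ≤ a * Real.log (a / b) := by
  rcases eq_or_lt_of_le ha with h | h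
  · rw [← h]; simp; linarith
  · rcases eq_or_lt_of_le hb with h' | h'
    · exfalso; have := hab h'.symm; linarith
    · have hba : 0 < b / a := by positivity
      have := Real.log_le_sub_one_of_pos hba
      have hlog : Real.log (a / b) = - Real.log (b / a) := by
        rw [← Real.log_inv]; congr 1; field_simp
      rw [hlog]
      have h2 : a * Real.log (b/a) ≤ a * (b/a - 1) := mul_le_mul_of_nonneg_left this ha
      have h3 : a * (b/a - 1) = b - a := by field_simp
      nlinarith

/-- Upper bound via a log-ratio bound. -/
lemma mul_log_div_le {a b L : ℝ} (ha : 0 ≤ a) (hL : a ≠ 0 → Real.log (a / b) ≤ L) :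
    a * Real.log (a / b) ≤ a * L := by
  rcases eq_or_ne a 0 with h | h
  · simp [h]
  · exact mul_le_mul_of_nonneg_left (hL h) ha

/-- Summability by sandwiching. -/
lemma summable_of_le_of_le {f g h : ℕ → ℝ} (h1 : ∀ n, g n ≤ f n) (h2 : ∀ n, f n ≤ h n)
    (hg : Summable g) (hh : Summable h) : Summable f := by
  refine Summable.of_abs (Summable.of_nonneg_of_le (fun n => abs_nonneg _)
    (fun n => ?_) (hg.abs.add hh.abs))
  rw [abs_le]
  constructor
  · nlinarith [neg_abs_le (g n), abs_nonneg (h n), h1 n]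
  · nlinarith [le_abs_self (h n), abs_nonneg (g n), h2 n]

/-- Splitting a `tsum` over `ℕ` into even and odd parts. -/
lemma tsum_even_odd {f g h : ℕ → ℝ} (hg : Summable g) (hh : Summable h)
    (he : ∀ n, f (2 * n) = g n) (ho : ∀ n, f (2 * n + 1) = h n) :
    ∑' t, f t = (∑' n, g n) + ∑' n, h n := by
  classical
  set fE : ℕ → ℝ := fun t => if Even t then f t else 0 with hfE
  set fO : ℕ → ℝ := fun t => if Even t then 0 else f t with hfO
  have hiE : Function.Injective (fun n : ℕ => 2 * n) := fun a b hab => by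
    simp only [] at hab; omega
  have hiO : Function.Injective (fun n : ℕ => 2 * n + 1) := fun a b hab => by
    simp only [] at hab; omega
  have hsE : ∀ t ∉ Set.range (fun n : ℕ => 2 * n), fE t = 0 := by
    intro t ht
    by_cases hE : Even t
    · exfalso; obtain ⟨k, hk⟩ := hE; exact ht ⟨k, by simp only []; omega⟩
    · simp [hfE, hE]
  have hsO : ∀ t ∉ Set.range (fun n : ℕ => 2 * n + 1), fO t = 0 := by
    intro t ht
    by_cases hE : Even t
    · simp [hfO, hE]
    · exfalso
      rw [Nat.not_even_iff] at hE
      exact ht ⟨t / 2, by simp only []; omega⟩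
  have hsE' : Function.support fE ⊆ Set.range (fun n : ℕ => 2 * n) := by
    intro t ht; by_contra hc; exact ht (hsE t hc)
  have hsO' : Function.support fO ⊆ Set.range (fun n : ℕ => 2 * n + 1) := by
    intro t ht; by_contra hc; exact ht (hsO t hc)
  have hcE : ∀ n, fE (2 * n) = g n := fun n => by
    simp only [hfE, if_pos (even_two_mul n)]; exact he n
  have hcO : ∀ n, fO (2 * n + 1) = h n := fun n => by
    have hodd : ¬ Even (2 * n + 1) := by simp [Nat.even_add_one, parity_simps]
    simp only [hfO, if_neg hodd]; exact ho n
  have hSE : Summable fE := (hiE.summable_iff hsE).mp (hg.congr (fun n => (hcE n).symm))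
  have hSO : Summable fO := (hiO.summable_iff hsO).mp (hh.congr (fun n => (hcO n).symm))
  have hf : f = fun t => fE t + fO t := by
    funext t; by_cases hE : Even t <;> simp [hfE, hfO, hE]
  rw [hf, Summable.tsum_add hSE hSO]
  congr 1
  · rw [← hiE.tsum_eq hsE']; exact tsum_congr hcE
  · rw [← hiO.tsum_eq hsO']; exact tsum_congr hcO

/-- Summability on `ℕ × Y` with `Y` finite, from slice summability. -/
lemma summable_prod_nat {Y : Type} [Fintype Y] [DecidableEq Y] {f : ℕ × Y → ℝ}
    (h : ∀ y, Summable fun t => f (t, y)) : Summable f := by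
  classical
  have key : ∀ y : Y, Summable (fun s : ℕ × Y => if s.2 = y then f s else 0) := by
    intro y
    have hi : Function.Injective (fun t : ℕ => ((t, y) : ℕ × Y)) := by
      intro a b hab; simpa using congrArg Prod.fst hab
    have hv : ∀ s ∉ Set.range (fun t : ℕ => ((t, y) : ℕ × Y)),
        (if s.2 = y then f s else 0) = 0 := by
      rintro ⟨t, y'⟩ hs
      have : y' ≠ y := fun hy => hs ⟨t, by simp [hy]⟩
      simp [this]
    exact (hi.summable_iff hv).mp ((h y).congr (fun t => by simp))
  have hf : f = fun s => ∑ y : Y, if s.2 = y then f s else 0 := by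
    funext s
    rw [Finset.sum_ite_eq Finset.univ s.2 (fun _ => f s), if_pos (Finset.mem_univ _)]
  rw [hf]
  exact summable_sum (fun y _ => key y)

/-- `tsum` on `ℕ × Y` with `Y` finite, as iterated sums. -/
lemma tsum_prod_nat {Y : Type} [Fintype Y] [DecidableEq Y] {f : ℕ × Y → ℝ}
    (h : ∀ y, Summable fun t => f (t, y)) :
    ∑' s : ℕ × Y, f s = ∑ y : Y, ∑' t : ℕ, f (t, y) := by
  classical
  have key : ∀ y : Y, (∑' s : ℕ × Y, if s.2 = y then f s else 0) = ∑' t, f (t, y) := by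
    intro y
    have hi : Function.Injective (fun t : ℕ => ((t, y) : ℕ × Y)) := by
      intro a b hab; simpa using congrArg Prod.fst hab
    have hv : Function.support (fun s : ℕ × Y => if s.2 = y then f s else 0) ⊆
        Set.range (fun t : ℕ => ((t, y) : ℕ × Y)) := by
      rintro ⟨t, y'⟩ hs
      by_cases hy : y' = y
      · exact ⟨t, by simp [hy]⟩
      · simp [hy] at hs
    rw [← hi.tsum_eq hv]
    exact tsum_congr (fun t => by simp)
  have hkey : ∀ y : Y, Summable (fun s : ℕ × Y => if s.2 = y then f s else 0) := by
    intro y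
    have hi : Function.Injective (fun t : ℕ => ((t, y) : ℕ × Y)) := by
      intro a b hab; simpa using congrArg Prod.fst hab
    have hv : ∀ s ∉ Set.range (fun t : ℕ => ((t, y) : ℕ × Y)),
        (if s.2 = y then f s else 0) = 0 := by
      rintro ⟨t, y'⟩ hs
      have : y' ≠ y := fun hy => hs ⟨t, by simp [hy]⟩
      simp [this]
    exact (hi.summable_iff hv).mp ((h y).congr (fun t => by simp))
  have hf1 : ∑' s : ℕ × Y, f s = ∑' s : ℕ × Y, ∑ y : Y, if s.2 = y then f s else 0 := by
    apply tsum_congr; intro s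
    rw [Finset.sum_ite_eq Finset.univ s.2 (fun _ => f s), if_pos (Finset.mem_univ _)]
  rw [hf1, Summable.tsum_finsetSum (fun y _ => hkey y)]
  exact Finset.sum_congr rfl (fun y _ => key y)

section Facts

variable {X Y : Type} [Fintype X] [Fintype Y] [DecidableEq Y]
variable {p : X → Y → ℝ} {κ : X → ℕ → ℝ}

/-- Joint density of `Y` and `T`. -/
def qf (p : X → Y → ℝ) (κ : X → ℕ → ℝ) (t : ℕ) (y : Y) : ℝ := ∑ x, p x y * κ x t

lemma p_nonneg (hp : IsJointDist p) (x : X) (y : Y) : 0 ≤ p x y := hp.1 x y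

lemma margX_nonneg (hp : IsJointDist p) (x : X) : 0 ≤ margX p x :=
  Finset.sum_nonneg fun y _ => hp.1 x y

lemma margY_nonneg (hp : IsJointDist p) (y : Y) : 0 ≤ margY p y :=
  Finset.sum_nonneg fun x _ => hp.1 x y

lemma p_le_margX (hp : IsJointDist p) (x : X) (y : Y) : p x y ≤ margX p x :=
  Finset.single_le_sum (fun y' _ => hp.1 x y') (Finset.mem_univ y)

lemma p_le_margY (hp : IsJointDist p) (x : X) (y : Y) : p x y ≤ margY p y :=
  Finset.single_le_sum (fun x' _ => hp.1 x' y) (Finset.mem_univ x)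

lemma sum_margX (hp : IsJointDist p) : ∑ x, margX p x = 1 := hp.2

lemma sum_margY (hp : IsJointDist p) : ∑ y, margY p y = 1 := by
  rw [← hp.2]; rw [Finset.sum_comm]; rfl

lemma margX_le_one (hp : IsJointDist p) (x : X) : margX p x ≤ 1 := by
  rw [← sum_margX hp]
  exact Finset.single_le_sum (fun x' _ => margX_nonneg hp x') (Finset.mem_univ x)

lemma margY_le_one (hp : IsJointDist p) (y : Y) : margY p y ≤ 1 := by
  rw [← sum_margY hp]
  exact Finset.single_le_sum (fun y' _ => margY_nonneg hp y') (Finset.mem_univ y)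

lemma kappa_nonneg (hκ : IsChannelNat κ) (x : X) (t : ℕ) : 0 ≤ κ x t := hκ.1 x t

lemma kappa_summable (hκ : IsChannelNat κ) (x : X) : Summable (κ x) := by
  by_contra h
  have := tsum_eq_zero_of_not_summable h
  rw [hκ.2 x] at this; norm_num at this

lemma margTib_nonneg (hp : IsJointDist p) (hκ : IsChannelNat κ) (t : ℕ) :
    0 ≤ margTib p κ t :=
  Finset.sum_nonneg fun x _ => mul_nonneg (margX_nonneg hp x) (hκ.1 x t)

lemma margTib_summable (hp : IsJointDist p) (hκ : IsChannelNat κ) :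
    Summable (margTib p κ) :=
  summable_sum fun x _ => (kappa_summable hκ x).mul_left (margX p x)

lemma margTib_tsum (hp : IsJointDist p) (hκ : IsChannelNat κ) :
    ∑' t, margTib p κ t = 1 := by
  unfold margTib
  rw [Summable.tsum_finsetSum (fun x _ => (kappa_summable hκ x).mul_left (margX p x))]
  rw [← sum_margX hp]
  exact Finset.sum_congr rfl fun x _ => by rw [tsum_mul_left, hκ.2 x, mul_one]

lemma qf_nonneg (hp : IsJointDist p) (hκ : IsChannelNat κ) (t : ℕ) (y : Y) :
    0 ≤ qf p κ t y :=
  Finset.sum_nonneg fun x _ => mul_nonneg (hp.1 x y) (hκ.1 x t)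

lemma qf_le_margTib (hp : IsJointDist p) (hκ : IsChannelNat κ) (t : ℕ) (y : Y) :
    qf p κ t y ≤ margTib p κ t :=
  Finset.sum_le_sum fun x _ => mul_le_mul_of_nonneg_right (p_le_margX hp x y) (hκ.1 x t)

lemma term_le_qf (hp : IsJointDist p) (hκ : IsChannelNat κ) (x : X) (t : ℕ) (y : Y) :
    p x y * κ x t ≤ qf p κ t y :=
  Finset.single_le_sum (fun x' _ => mul_nonneg (hp.1 x' y) (hκ.1 x' t)) (Finset.mem_univ x)

lemma term_le_margTib (hp : IsJointDist p) (hκ : IsChannelNat κ) (x : X) (t : ℕ) :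
    margX p x * κ x t ≤ margTib p κ t :=
  Finset.single_le_sum (fun x' _ => mul_nonneg (margX_nonneg hp x') (hκ.1 x' t))
    (Finset.mem_univ x)

lemma qf_summable (hp : IsJointDist p) (hκ : IsChannelNat κ) (y : Y) :
    Summable (fun t => qf p κ t y) :=
  summable_sum fun x _ => (kappa_summable hκ x).mul_left (p x y)

lemma qf_tsum (hp : IsJointDist p) (hκ : IsChannelNat κ) (y : Y) :
    ∑' t, qf p κ t y = margY p y := by
  unfold qf
  rw [Summable.tsum_finsetSum (fun x _ => (kappa_summable hκ x).mul_left (p x y))]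
  unfold margY
  exact Finset.sum_congr rfl fun x _ => by rw [tsum_mul_left, hκ.2 x, mul_one]

end Facts

set_option linter.unusedSectionVars false
set_option linter.unusedVariables false

/-- Master summability lemma for weighted log ratios. -/
lemma summable_mul_log_div_s3 {f r : ℕ → ℝ} {c : ℝ} (hc : 0 < c)
    (hf0 : ∀ t, 0 ≤ f t) (hr0 : ∀ t, 0 ≤ r t)
    (hfr : ∀ t, c * f t ≤ r t) (hf : Summable f) (hr : Summable r) :
    Summable (fun t => f t * Real.log (f t / r t)) := by
  apply summable_of_le_of_le (g := fun t => f t - r t)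
    (h := fun t => f t * Real.log (1 / c))
  · intro t
    apply mul_log_div_ge (hf0 t) (hr0 t)
    intro h0
    have := hfr t
    rw [h0] at this
    nlinarith [hf0 t]
  · intro t
    apply mul_log_div_le (hf0 t)
    intro hne
    have hfpos : 0 < f t := lt_of_le_of_ne (hf0 t) (Ne.symm hne)
    have hrpos : 0 < r t := lt_of_lt_of_le (by positivity) (hfr t)
    apply Real.log_le_log (by positivity)
    rw [div_le_div_iff₀ hrpos hc]
    nlinarith [hfr t]
  · exact hf.sub hr
  · exact hf.mul_right _

/-- Gibbs inequality for `tsum`s. -/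
lemma tsum_mul_log_div_nonneg {f r : ℕ → ℝ} (hf0 : ∀ t, 0 ≤ f t) (hr0 : ∀ t, 0 ≤ r t)
    (h0 : ∀ t, r t = 0 → f t = 0) (hf : Summable f) (hr : Summable r)
    (hS : Summable (fun t => f t * Real.log (f t / r t)))
    (hsum : ∑' t, r t ≤ ∑' t, f t) : 0 ≤ ∑' t, f t * Real.log (f t / r t) := by
  have h1 : ∑' t, (f t - r t) ≤ ∑' t, f t * Real.log (f t / r t) := by
    apply Summable.tsum_le_tsum (fun t => mul_log_div_ge (hf0 t) (hr0 t) (h0 t)) (hf.sub hr) hS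
  have h2 : ∑' t, (f t - r t) = (∑' t, f t) - ∑' t, r t := Summable.tsum_sub hf hr
  linarith

section Slices

variable {X Y : Type} [Fintype X] [Fintype Y] [DecidableEq Y]
variable {p : X → Y → ℝ} {κ : X → ℕ → ℝ}

/-- Summability of the `X`-slice of `miXTib`. -/
lemma summable_sliceB (hp : IsJointDist p) (hκ : IsChannelNat κ) (x : X)
    (hx : 0 < margX p x) :
    Summable (fun t => κ x t * Real.log (κ x t / margTib p κ t)) :=
  summable_mul_log_div_s3 hx (hκ.1 x) (margTib_nonneg hp hκ)
    (fun t => term_le_margTib hp hκ x t) (kappa_summable hκ x) (margTib_summable hp hκ)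

/-- Summability of the full `X`-slice of `miXTib` (with the weight). -/
lemma summable_sliceX (hp : IsJointDist p) (hκ : IsChannelNat κ) (x : X) :
    Summable (fun t => margX p x * κ x t * Real.log (κ x t / margTib p κ t)) := by
  rcases eq_or_lt_of_le (margX_nonneg hp x) with h | h
  · exact summable_zero.congr (fun t => by rw [← h]; ring)
  · have := (summable_sliceB hp hκ x h).mul_left (margX p x)
    exact this.congr (fun t => by ring)

/-- Summability of the `A`-type slice. -/
lemma summable_sliceA (hp : IsJointDist p) (hκ : IsChannelNat κ) {x : X} {y : Y}
    (hxy : 0 < p x y) :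
    Summable (fun t => κ x t * Real.log (κ x t / qf p κ t y)) :=
  summable_mul_log_div_s3 hxy (hκ.1 x) (fun t => qf_nonneg hp hκ t y)
    (fun t => term_le_qf hp hκ x t y) (kappa_summable hκ x) (qf_summable hp hκ y)

/-- Summability of the `A'`-type slice. -/
lemma summable_sliceA' (hp : IsJointDist p) (hκ : IsChannelNat κ) {x : X} {y : Y}
    (hxy : 0 < p x y) :
    Summable (fun t => κ x t * Real.log (κ x t / (qf p κ t y / margY p y))) := by
  have hy : 0 < margY p y := lt_of_lt_of_le hxy (p_le_margY hp x y)
  refine summable_mul_log_div_s3 hxy (hκ.1 x)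
    (fun t => div_nonneg (qf_nonneg hp hκ t y) hy.le) (fun t => ?_)
    (kappa_summable hκ x) ((qf_summable hp hκ y).div_const _)
  have h1 : p x y * κ x t ≤ qf p κ t y := term_le_qf hp hκ x t y
  have h2 : qf p κ t y ≤ qf p κ t y / margY p y := by
    rw [le_div_iff₀ hy]
    nlinarith [qf_nonneg hp hκ t y, margY_le_one hp y]
  linarith

/-- Summability of the `Y`-slice of `miYTib` / `klNY`. -/
lemma summable_sliceY (hp : IsJointDist p) (hκ : IsChannelNat κ) (y : Y) :
    Summable (fun t => qf p κ t y *
      Real.log (qf p κ t y / (margY p y * margTib p κ t))) := by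
  rcases eq_or_lt_of_le (margY_nonneg hp y) with h | h
  · refine summable_zero.congr (fun t => ?_)
    have hq : qf p κ t y = 0 := by
      apply Finset.sum_eq_zero; intro x _
      have h1 := p_le_margY hp x y
      have h2 := hp.1 x y
      have : p x y = 0 := by linarith
      rw [this, zero_mul]
    rw [hq]; ring
  · refine summable_mul_log_div_s3 h (fun t => qf_nonneg hp hκ t y)
      (fun t => mul_nonneg h.le (margTib_nonneg hp hκ t)) (fun t => ?_)
      (qf_summable hp hκ y) ((margTib_summable hp hκ).mul_left _)
    have := qf_le_margTib hp hκ t y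
    nlinarith

end Slices

section Core

variable {X Y : Type} [Fintype X] [Fintype Y] [DecidableEq Y]
variable {p : X → Y → ℝ} {κ : X → ℕ → ℝ}

lemma pushNY_joint (hp : IsJointDist p) (hκ : IsChannelNat κ) (t : ℕ) (y : Y) :
    pushNY (jointW p) (tensIdY κ) (t, y) = qf p κ t y := by
  unfold pushNY jointW tensIdY qf
  rw [Fintype.sum_prod_type]
  apply Finset.sum_congr rfl; intro x _
  have h : ∀ y' : Y, p x y' * (κ x t * (if y = y' then (1:ℝ) else 0)) =
      if y = y' then p x y' * κ x t else 0 := fun y' => by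
    by_cases h : y = y' <;> simp [h]
  rw [Finset.sum_congr rfl (fun y' _ => h y'), Finset.sum_ite_eq Finset.univ y,
    if_pos (Finset.mem_univ y)]

lemma pushNY_split (hp : IsJointDist p) (hκ : IsChannelNat κ) (t : ℕ) (y : Y) :
    pushNY (splitW p) (tensIdY κ) (t, y) = margY p y * margTib p κ t := by
  unfold pushNY splitW tensIdY margTib
  rw [Fintype.sum_prod_type]
  rw [Finset.mul_sum]
  apply Finset.sum_congr rfl; intro x _
  have h : ∀ y' : Y, margX p x * margY p y' * (κ x t * (if y = y' then (1:ℝ) else 0)) =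
      if y = y' then margY p y' * (margX p x * κ x t) else 0 := fun y' => by
    by_cases h : y = y' <;> simp [h]; ring
  rw [Finset.sum_congr rfl (fun y' _ => h y'), Finset.sum_ite_eq Finset.univ y,
    if_pos (Finset.mem_univ y)]

lemma pw_decomp (hp : IsJointDist p) (hκ : IsChannelNat κ) {x : X} {y : Y}
    (hxy : 0 < p x y) (t : ℕ) :
    κ x t * Real.log (qf p κ t y / (margY p y * margTib p κ t)) =
      κ x t * Real.log (κ x t / margTib p κ t)
      - κ x t * Real.log (κ x t / qf p κ t y)
      - κ x t * Real.log (margY p y) := by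
  by_cases hk : κ x t = 0
  · simp [hk]
  · have hkpos : 0 < κ x t := lt_of_le_of_ne (hκ.1 x t) (Ne.symm hk)
    have hx : 0 < margX p x := lt_of_lt_of_le hxy (p_le_margX hp x y)
    have hy : 0 < margY p y := lt_of_lt_of_le hxy (p_le_margY hp x y)
    have hq : 0 < qf p κ t y := lt_of_lt_of_le (by positivity) (term_le_qf hp hκ x t y)
    have hr : 0 < margTib p κ t := lt_of_lt_of_le (by positivity) (term_le_margTib hp hκ x t)
    rw [Real.log_div hq.ne' (by positivity), Real.log_mul hy.ne' hr.ne',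
      Real.log_div hk hr.ne', Real.log_div hk hq.ne']
    ring

lemma summable_sliceC (hp : IsJointDist p) (hκ : IsChannelNat κ) {x : X} {y : Y}
    (hxy : 0 < p x y) :
    Summable (fun t => κ x t *
      Real.log (qf p κ t y / (margY p y * margTib p κ t))) := by
  have hx : 0 < margX p x := lt_of_lt_of_le hxy (p_le_margX hp x y)
  have SB := summable_sliceB hp hκ x hx
  have SA := summable_sliceA hp hκ hxy
  have hD : Summable (fun t => κ x t * Real.log (margY p y)) :=
    (kappa_summable hκ x).mul_right _
  exact ((SB.sub SA).sub hD).congr (fun t => (pw_decomp hp hκ hxy t).symm)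

lemma tsum_kappa_mul (hκ : IsChannelNat κ) (x : X) (c : ℝ) :
    ∑' t, κ x t * c = c := by
  rw [tsum_mul_right, hκ.2 x, one_mul]

lemma sliceC_eq (hp : IsJointDist p) (hκ : IsChannelNat κ) {x : X} {y : Y}
    (hxy : 0 < p x y) :
    ∑' t, κ x t * Real.log (qf p κ t y / (margY p y * margTib p κ t)) =
      (∑' t, κ x t * Real.log (κ x t / margTib p κ t))
      - (∑' t, κ x t * Real.log (κ x t / qf p κ t y))
      - Real.log (margY p y) := by
  have hx : 0 < margX p x := lt_of_lt_of_le hxy (p_le_margX hp x y)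
  have SB := summable_sliceB hp hκ x hx
  have SA := summable_sliceA hp hκ hxy
  have hD : Summable (fun t => κ x t * Real.log (margY p y)) :=
    (kappa_summable hκ x).mul_right _
  rw [tsum_congr (pw_decomp hp hκ hxy), Summable.tsum_sub (SB.sub SA) hD, Summable.tsum_sub SB SA,
    tsum_kappa_mul hκ x]

lemma weighted_decomp (hp : IsJointDist p) (hκ : IsChannelNat κ) (x : X) (y : Y) :
    p x y * (∑' t, κ x t * Real.log (κ x t / qf p κ t y)) =
      p x y * (∑' t, κ x t * Real.log (κ x t / margTib p κ t))
      - p x y * (∑' t, κ x t * Real.log (qf p κ t y / (margY p y * margTib p κ t)))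
      - p x y * Real.log (margY p y) := by
  rcases eq_or_lt_of_le (hp.1 x y) with h | h
  · rw [← h]; ring
  · have := sliceC_eq hp hκ h
    rw [this]; ring

/-- Nonnegativity of the conditional relative entropy term. -/
lemma weighted_ineq (hp : IsJointDist p) (hκ : IsChannelNat κ) (x : X) (y : Y) :
    0 ≤ p x y * (∑' t, κ x t * Real.log (κ x t / margTib p κ t))
      - p x y * (∑' t, κ x t * Real.log (qf p κ t y / (margY p y * margTib p κ t))) := by
  rcases eq_or_lt_of_le (hp.1 x y) with h | h
  · rw [← h]; ring_nf; exact le_refl 0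
  · have hy : 0 < margY p y := lt_of_lt_of_le h (p_le_margY hp x y)
    have SA := summable_sliceA hp hκ h
    have hD : Summable (fun t => κ x t * Real.log (margY p y)) :=
      (kappa_summable hκ x).mul_right _
    -- the A' slice
    have hpw : ∀ t, κ x t * Real.log (κ x t / (qf p κ t y / margY p y)) =
        κ x t * Real.log (κ x t / qf p κ t y) + κ x t * Real.log (margY p y) := by
      intro t
      by_cases hk : κ x t = 0
      · simp [hk]
      · have hkpos : 0 < κ x t := lt_of_le_of_ne (hκ.1 x t) (Ne.symm hk)
        have hq : 0 < qf p κ t y := lt_of_lt_of_le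
          (by positivity : (0:ℝ) < p x y * κ x t) (term_le_qf hp hκ x t y)
        rw [Real.log_div hk (by positivity), Real.log_div hq.ne' hy.ne',
          Real.log_div hk hq.ne']
        ring
    have hA' : ∑' t, κ x t * Real.log (κ x t / (qf p κ t y / margY p y)) =
        (∑' t, κ x t * Real.log (κ x t / qf p κ t y)) + Real.log (margY p y) := by
      rw [tsum_congr hpw, Summable.tsum_add SA hD, tsum_kappa_mul hκ x]
    have hr : ∑' t, qf p κ t y / margY p y = 1 := by
      simp only [div_eq_mul_inv]
      rw [tsum_mul_right, qf_tsum hp hκ y, mul_inv_cancel₀ hy.ne']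
    have hnn : 0 ≤ ∑' t, κ x t * Real.log (κ x t / (qf p κ t y / margY p y)) := by
      apply tsum_mul_log_div_nonneg (hκ.1 x)
        (fun t => div_nonneg (qf_nonneg hp hκ t y) hy.le)
        (fun t h0 => ?_) (kappa_summable hκ x) ((qf_summable hp hκ y).div_const _)
        (summable_sliceA' hp hκ h)
        (by rw [hr, hκ.2 x])
      -- r t = 0 → κ x t = 0
      by_contra hk
      have hkpos : 0 < κ x t := lt_of_le_of_ne (hκ.1 x t) (Ne.symm hk)
      have hq : 0 < qf p κ t y := lt_of_lt_of_le
        (by positivity : (0:ℝ) < p x y * κ x t) (term_le_qf hp hκ x t y)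
      have hqy : 0 < qf p κ t y / margY p y := by positivity
      rw [h0] at hqy; exact lt_irrefl 0 hqy
    have hgoal := weighted_decomp hp hκ x y
    nlinarith [hA', hgoal, mul_nonneg h.le hnn]

end Core

section Main

variable {X Y : Type} [Fintype X] [Fintype Y] [DecidableEq Y]
variable {p : X → Y → ℝ} {κ : X → ℕ → ℝ}

/-- `miXTib` as a double sum of weighted slices. -/
lemma miXTib_rep (hp : IsJointDist p) (hκ : IsChannelNat κ) :
    miXTib p κ = ∑ x, ∑ y, p x y *
      (∑' t, κ x t * Real.log (κ x t / margTib p κ t)) := by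
  unfold miXTib
  apply Finset.sum_congr rfl; intro x _
  have h1 : ∑' t, margX p x * κ x t * Real.log (κ x t / margTib p κ t) =
      margX p x * ∑' t, κ x t * Real.log (κ x t / margTib p κ t) := by
    rw [← tsum_mul_left]
    exact tsum_congr (fun t => by ring)
  rw [h1]
  unfold margX
  rw [Finset.sum_mul]

/-- `miYTib` as a double sum of weighted slices. -/
lemma miYTib_rep (hp : IsJointDist p) (hκ : IsChannelNat κ) :
    miYTib p κ = ∑ y, ∑ x, p x y *
      (∑' t, κ x t * Real.log (qf p κ t y / (margY p y * margTib p κ t))) := by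
  unfold miYTib
  apply Finset.sum_congr rfl; intro y _
  have h1 : ∀ t, (∑ x, p x y * κ x t) *
      Real.log ((∑ x, p x y * κ x t) / (margY p y * margTib p κ t)) =
      ∑ x, p x y * (κ x t * Real.log (qf p κ t y / (margY p y * margTib p κ t))) := by
    intro t
    rw [Finset.sum_mul]
    apply Finset.sum_congr rfl; intro x _
    have : qf p κ t y = ∑ x, p x y * κ x t := rfl
    rw [this]; ring
  rw [tsum_congr h1]
  have hsummable : ∀ x ∈ Finset.univ, Summable (fun t => p x y *
      (κ x t * Real.log (qf p κ t y / (margY p y * margTib p κ t)))) := by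
    intro x _
    rcases eq_or_lt_of_le (hp.1 x y) with h | h
    · exact summable_zero.congr (fun t => by rw [← h]; ring)
    · exact (summable_sliceC hp hκ h).mul_left _
  rw [Summable.tsum_finsetSum hsummable]
  apply Finset.sum_congr rfl; intro x _
  rw [tsum_mul_left]

/-- The KL divergence of the pushforwards equals `I_q(Y;T)`. -/
lemma klNY_eq (hp : IsJointDist p) (hκ : IsChannelNat κ) :
    klNY (pushNY (jointW p) (tensIdY κ)) (pushNY (splitW p) (tensIdY κ)) =
      miYTib p κ := by
  unfold klNY
  have h1 : ∀ s : ℕ × Y, pushNY (jointW p) (tensIdY κ) s *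
      Real.log (pushNY (jointW p) (tensIdY κ) s / pushNY (splitW p) (tensIdY κ) s) =
      qf p κ s.1 s.2 * Real.log (qf p κ s.1 s.2 / (margY p s.2 * margTib p κ s.1)) := by
    rintro ⟨t, y⟩
    rw [pushNY_joint hp hκ, pushNY_split hp hκ]
  rw [tsum_congr h1]
  rw [tsum_prod_nat (f := fun s : ℕ × Y => qf p κ s.1 s.2 *
      Real.log (qf p κ s.1 s.2 / (margY p s.2 * margTib p κ s.1)))
    (fun y => summable_sliceY hp hκ y)]
  rfl

/-- `miNY` decomposition. -/
lemma miNY_eq (hp : IsJointDist p) (hκ : IsChannelNat κ) :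
    miNY (jointW p) (tensIdY κ) = miXTib p κ - miYTib p κ
      - ∑ y, margY p y * Real.log (margY p y) := by
  have inner_eq : ∀ x y, (∑' s : ℕ × Y, jointW p (x, y) * tensIdY κ (x, y) s *
      Real.log (tensIdY κ (x, y) s / pushNY (jointW p) (tensIdY κ) s)) =
      p x y * ∑' t, κ x t * Real.log (κ x t / qf p κ t y) := by
    intro x y
    have hi : Function.Injective (fun t : ℕ => ((t, y) : ℕ × Y)) := by
      intro a b hab; simpa using congrArg Prod.fst hab
    have hsupp : Function.support (fun s : ℕ × Y => jointW p (x, y) * tensIdY κ (x, y) s *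
        Real.log (tensIdY κ (x, y) s / pushNY (jointW p) (tensIdY κ) s)) ⊆
        Set.range (fun t : ℕ => ((t, y) : ℕ × Y)) := by
      rintro ⟨t, y'⟩ hs
      by_cases hy : y' = y
      · exact ⟨t, by rw [hy]⟩
      · exfalso; apply hs
        have hz : tensIdY κ (x, y) (t, y') = 0 := by
          unfold tensIdY; simp [hy]
        show jointW p (x, y) * tensIdY κ (x, y) (t, y') *
          Real.log (tensIdY κ (x, y) (t, y') / pushNY (jointW p) (tensIdY κ) (t, y')) = 0
        rw [hz]; simp
    rw [← hi.tsum_eq hsupp]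
    have : ∀ t : ℕ, jointW p (x, y) * tensIdY κ (x, y) (t, y) *
        Real.log (tensIdY κ (x, y) (t, y) / pushNY (jointW p) (tensIdY κ) (t, y)) =
        p x y * (κ x t * Real.log (κ x t / qf p κ t y)) := by
      intro t
      have ht : tensIdY κ (x, y) (t, y) = κ x t := by unfold tensIdY; simp
      rw [ht, pushNY_joint hp hκ]
      unfold jointW; ring
    rw [tsum_congr this, tsum_mul_left]
  have hm : miNY (jointW p) (tensIdY κ) = ∑ x, ∑ y, p x y *
      (∑' t, κ x t * Real.log (κ x t / qf p κ t y)) := by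
    unfold miNY
    rw [Fintype.sum_prod_type]
    exact Finset.sum_congr rfl fun x _ => Finset.sum_congr rfl fun y _ => inner_eq x y
  have hH : ∑ y, margY p y * Real.log (margY p y) =
      ∑ x, ∑ y, p x y * Real.log (margY p y) := by
    rw [Finset.sum_comm]
    apply Finset.sum_congr rfl; intro y _
    unfold margY; rw [Finset.sum_mul]
  rw [hm, miXTib_rep hp hκ, miYTib_rep hp hκ, hH, Finset.sum_comm (γ := Y)]
  rw [← Finset.sum_sub_distrib, ← Finset.sum_sub_distrib]
  apply Finset.sum_congr rfl; intro x _
  rw [← Finset.sum_sub_distrib, ← Finset.sum_sub_distrib]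
  apply Finset.sum_congr rfl; intro y _
  exact weighted_decomp hp hκ x y

/-- Data processing: `I(Y;T) ≤ I(X;T)`. -/
lemma miY_le_miX (hp : IsJointDist p) (hκ : IsChannelNat κ) :
    miYTib p κ ≤ miXTib p κ := by
  rw [miXTib_rep hp hκ, miYTib_rep hp hκ, Finset.sum_comm (γ := Y)]
  rw [← sub_nonneg, ← Finset.sum_sub_distrib]
  apply Finset.sum_nonneg; intro x _
  rw [← Finset.sum_sub_distrib]
  apply Finset.sum_nonneg; intro y _
  exact weighted_ineq hp hκ x y

/-- Nonnegativity of `I(Y;T)`. -/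
lemma miY_nonneg (hp : IsJointDist p) (hκ : IsChannelNat κ) :
    0 ≤ miYTib p κ := by
  unfold miYTib
  apply Finset.sum_nonneg; intro y _
  rcases eq_or_lt_of_le (margY_nonneg hp y) with h | h
  · have hq : ∀ t, (∑ x, p x y * κ x t) = 0 := by
      intro t
      apply Finset.sum_eq_zero; intro x _
      have h1 := p_le_margY hp x y
      have h2 := hp.1 x y
      have : p x y = 0 := by linarith
      rw [this, zero_mul]
    have : ∀ t : ℕ, (∑ x, p x y * κ x t) *
        Real.log ((∑ x, p x y * κ x t) / (margY p y * margTib p κ t)) = 0 := by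
      intro t; rw [hq t, zero_mul]
    rw [tsum_congr this]; simp
  · have := tsum_mul_log_div_nonneg (f := fun t => qf p κ t y)
      (r := fun t => margY p y * margTib p κ t)
      (fun t => qf_nonneg hp hκ t y)
      (fun t => mul_nonneg h.le (margTib_nonneg hp hκ t))
      (fun t h0 => ?_)
      (qf_summable hp hκ y) ((margTib_summable hp hκ).mul_left _)
      (summable_sliceY hp hκ y) ?_
    · exact this
    · -- r t = 0 → qf t y = 0
      have h0' : margY p y * margTib p κ t = 0 := h0
      have hrt : margTib p κ t = 0 := by
        by_contra hc
        have h1 : 0 < margTib p κ t := lt_of_le_of_ne (margTib_nonneg hp hκ t) (Ne.symm hc)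
        nlinarith
      have := qf_le_margTib hp hκ t y
      have := qf_nonneg hp hκ t y
      linarith
    · rw [tsum_mul_left, margTib_tsum hp hκ, qf_tsum hp hκ y, mul_one]

end Main

section Scale

variable {X Y : Type} [Fintype X] [Fintype Y] [DecidableEq Y]

/-- The `α`-scaled channel: with probability `α` transmit via `κ` (on even numbers),
with probability `1-α` emit an independent sample of the `T`-marginal (on odd numbers). -/
def scaleCh (p : X → Y → ℝ) (κ : X → ℕ → ℝ) (α : ℝ) : X → ℕ → ℝ :=
  fun x t => if Even t then α * κ x (t / 2) else (1 - α) * margTib p κ (t / 2)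

variable {p : X → Y → ℝ} {κ : X → ℕ → ℝ} {α : ℝ}

lemma scaleCh_even (x : X) (n : ℕ) : scaleCh p κ α x (2 * n) = α * κ x n := by
  unfold scaleCh
  rw [if_pos (even_two_mul n)]
  have h2 : 2 * n / 2 = n := by omega
  rw [h2]

lemma scaleCh_odd (x : X) (n : ℕ) :
    scaleCh p κ α x (2 * n + 1) = (1 - α) * margTib p κ n := by
  unfold scaleCh
  have : ¬ Even (2 * n + 1) := by simp [Nat.even_add_one, parity_simps]
  rw [if_neg this]
  have h2 : (2 * n + 1) / 2 = n := by omega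
  rw [h2]

lemma miYTib_qf_form : miYTib p κ = ∑ y, ∑' t, qf p κ t y *
    Real.log (qf p κ t y / (margY p y * margTib p κ t)) := rfl

lemma isChannel_scale (hp : IsJointDist p) (hκ : IsChannelNat κ)
    (hα0 : 0 ≤ α) (hα1 : α ≤ 1) : IsChannelNat (scaleCh p κ α) := by
  constructor
  · intro x t
    unfold scaleCh
    by_cases h : Even t
    · rw [if_pos h]; exact mul_nonneg hα0 (hκ.1 x _)
    · rw [if_neg h]; exact mul_nonneg (by linarith) (margTib_nonneg hp hκ _)
  · intro x
    rw [tsum_even_odd (g := fun n => α * κ x n) (f := scaleCh p κ α x)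
      (h := fun n => (1 - α) * margTib p κ n)
      ((kappa_summable hκ x).mul_left α) ((margTib_summable hp hκ).mul_left (1 - α))
      (fun n => scaleCh_even x n) (fun n => scaleCh_odd x n)]
    rw [tsum_mul_left, tsum_mul_left, hκ.2 x, margTib_tsum hp hκ]
    ring

lemma margTib_scale_even (hp : IsJointDist p) (hκ : IsChannelNat κ) (n : ℕ) :
    margTib p (scaleCh p κ α) (2 * n) = α * margTib p κ n := by
  unfold margTib
  rw [Finset.mul_sum]
  apply Finset.sum_congr rfl; intro x _
  rw [scaleCh_even]; ring

lemma margTib_scale_odd (hp : IsJointDist p) (hκ : IsChannelNat κ) (n : ℕ) :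
    margTib p (scaleCh p κ α) (2 * n + 1) = (1 - α) * margTib p κ n := by
  unfold margTib
  have h : ∀ x : X, margX p x * scaleCh p κ α x (2 * n + 1) =
      ((1 - α) * margTib p κ n) * margX p x := fun x => by rw [scaleCh_odd]; ring
  rw [Finset.sum_congr rfl (fun x _ => h x), ← Finset.mul_sum, sum_margX hp, mul_one]
  rfl

lemma qf_scale_even (hp : IsJointDist p) (hκ : IsChannelNat κ) (n : ℕ) (y : Y) :
    qf p (scaleCh p κ α) (2 * n) y = α * qf p κ n y := by
  unfold qf
  rw [Finset.mul_sum]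
  apply Finset.sum_congr rfl; intro x _
  rw [scaleCh_even]; ring

lemma qf_scale_odd (hp : IsJointDist p) (hκ : IsChannelNat κ) (n : ℕ) (y : Y) :
    qf p (scaleCh p κ α) (2 * n + 1) y = (1 - α) * (margY p y * margTib p κ n) := by
  unfold qf
  have h : ∀ x : X, p x y * scaleCh p κ α x (2 * n + 1) =
      ((1 - α) * margTib p κ n) * p x y := fun x => by rw [scaleCh_odd]; ring
  rw [Finset.sum_congr rfl (fun x _ => h x), ← Finset.mul_sum]
  unfold margY; ring

lemma miXTib_scale (hp : IsJointDist p) (hκ : IsChannelNat κ) (hα0 : 0 ≤ α) :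
    miXTib p (scaleCh p κ α) = α * miXTib p κ := by
  unfold miXTib
  rw [Finset.mul_sum]
  apply Finset.sum_congr rfl; intro x _
  have he : ∀ n, margX p x * scaleCh p κ α x (2 * n) *
      Real.log (scaleCh p κ α x (2 * n) / margTib p (scaleCh p κ α) (2 * n)) =
      α * (margX p x * κ x n * Real.log (κ x n / margTib p κ n)) := by
    intro n
    rw [scaleCh_even, margTib_scale_even hp hκ]
    rcases eq_or_lt_of_le hα0 with h | h
    · rw [← h]; ring
    · rw [mul_div_mul_left _ _ h.ne']; ring
  have ho : ∀ n, margX p x * scaleCh p κ α x (2 * n + 1) *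
      Real.log (scaleCh p κ α x (2 * n + 1) / margTib p (scaleCh p κ α) (2 * n + 1)) =
      (0 : ℝ) := by
    intro n
    rw [scaleCh_odd, margTib_scale_odd hp hκ]
    rcases eq_or_ne ((1 - α) * margTib p κ n) 0 with h | h
    · rw [h]; ring
    · rw [div_self h, Real.log_one]; ring
  rw [tsum_even_odd (g := fun n => α * (margX p x * κ x n *
      Real.log (κ x n / margTib p κ n))) (h := fun _ => (0:ℝ))
      ((summable_sliceX hp hκ x).mul_left α) summable_zero he ho]
  rw [tsum_zero, add_zero, tsum_mul_left]

lemma miYTib_scale (hp : IsJointDist p) (hκ : IsChannelNat κ) (hα0 : 0 ≤ α) :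
    miYTib p (scaleCh p κ α) = α * miYTib p κ := by
  rw [miYTib_qf_form, miYTib_qf_form, Finset.mul_sum]
  apply Finset.sum_congr rfl; intro y _
  have he : ∀ n, qf p (scaleCh p κ α) (2 * n) y *
      Real.log (qf p (scaleCh p κ α) (2 * n) y /
        (margY p y * margTib p (scaleCh p κ α) (2 * n))) =
      α * (qf p κ n y * Real.log (qf p κ n y / (margY p y * margTib p κ n))) := by
    intro n
    rw [qf_scale_even hp hκ, margTib_scale_even hp hκ]
    rcases eq_or_lt_of_le hα0 with h | h
    · rw [← h]; ring
    · rw [show margY p y * (α * margTib p κ n) = α * (margY p y * margTib p κ n) by ring,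
        mul_div_mul_left _ _ h.ne']
      ring
  have ho : ∀ n, qf p (scaleCh p κ α) (2 * n + 1) y *
      Real.log (qf p (scaleCh p κ α) (2 * n + 1) y /
        (margY p y * margTib p (scaleCh p κ α) (2 * n + 1))) = (0:ℝ) := by
    intro n
    rw [qf_scale_odd hp hκ, margTib_scale_odd hp hκ]
    rw [show margY p y * ((1 - α) * margTib p κ n) =
      (1 - α) * (margY p y * margTib p κ n) by ring]
    rcases eq_or_ne ((1 - α) * (margY p y * margTib p κ n)) 0 with h | h
    · rw [h]; ring
    · rw [div_self h, Real.log_one]; ring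
  rw [tsum_even_odd (g := fun n => α * (qf p κ n y *
      Real.log (qf p κ n y / (margY p y * margTib p κ n)))) (h := fun _ => (0:ℝ))
      ((summable_sliceY hp hκ y).mul_left α) summable_zero he ho]
  rw [tsum_zero, add_zero, tsum_mul_left]

end Scale

/-- For every `0 ≤ λ ≤ I(X;Y)`, a channel `κ_X ⊗ e_Y ∈ C_IB(X,Y)`
minimises `I_κ(X,Y;T)` over `C_IB(X,Y)` subject to
`D(κ(p(X,Y)) ‖ κ(p(X)p(Y))) = λ`, if and only if `κ_X` solves the Information
Bottleneck problem: minimise `I_q(X;T_ib)` over channels `q(T_ib|X)` subject to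
`I_q(Y;T_ib) ≥ λ`, with joint distribution `q(x,y,t) = p(x,y) q(t|x)`. -/
theorem ib_as_constrained_iib {X Y : Type} [Fintype X] [Fintype Y] [DecidableEq Y]
    (p : X → Y → ℝ) (hp : IsJointDist p)
    (lam : ℝ) (hlam0 : 0 ≤ lam) (hlam1 : lam ≤ miXY p)
    (κX : X → ℕ → ℝ) (hκX : IsChannelNat κX) :
    (klNY (pushNY (jointW p) (tensIdY κX)) (pushNY (splitW p) (tensIdY κX)) = lam ∧
      ∀ κX' : X → ℕ → ℝ, IsChannelNat κX' →
        klNY (pushNY (jointW p) (tensIdY κX')) (pushNY (splitW p) (tensIdY κX')) = lam →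
        miNY (jointW p) (tensIdY κX) ≤ miNY (jointW p) (tensIdY κX')) ↔
    (lam ≤ miYTib p κX ∧
      ∀ κX' : X → ℕ → ℝ, IsChannelNat κX' →
        lam ≤ miYTib p κX' → miXTib p κX ≤ miXTib p κX') := by
    classical
  constructor
  · rintro ⟨hk, hmin⟩
    rw [klNY_eq hp hκX] at hk
    refine ⟨le_of_eq hk.symm, ?_⟩
    intro κ' hκ' hfeas
    have h0 : 0 ≤ miYTib p κ' := miY_nonneg hp hκ'
    have hIx' : 0 ≤ miXTib p κ' := le_trans h0 (miY_le_miX hp hκ')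
    set α : ℝ := if miYTib p κ' = 0 then 0 else lam / miYTib p κ' with hαdef
    have hα0 : 0 ≤ α := by
      rw [hαdef]; split
      · exact le_refl 0
      · exact div_nonneg hlam0 h0
    have hα1 : α ≤ 1 := by
      rw [hαdef]; split
      · norm_num
      · next hz =>
          exact (div_le_one (lt_of_le_of_ne h0 (Ne.symm hz))).mpr hfeas
    have hαIy : α * miYTib p κ' = lam := by
      rw [hαdef]
      by_cases hz : miYTib p κ' = 0
      · rw [if_pos hz, hz]
        have : lam ≤ 0 := hz ▸ hfeas
        linarith
      · rw [if_neg hz, div_mul_cancel₀ _ hz]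
    have hch := isChannel_scale hp hκ' hα0 hα1
    have hfeasS : miYTib p (scaleCh p κ' α) = lam := by
      rw [miYTib_scale hp hκ' hα0]; exact hαIy
    have hle := hmin _ hch (by rw [klNY_eq hp hch]; exact hfeasS)
    rw [miNY_eq hp hκX, miNY_eq hp hch, miYTib_scale hp hκ' hα0,
      miXTib_scale hp hκ' hα0] at hle
    have hαle : α * miXTib p κ' ≤ miXTib p κ' := by nlinarith
    linarith
  · rintro ⟨hfe, hmin⟩
    have hIy_le := miY_le_miX hp hκX
    have hIx0 : 0 ≤ miXTib p κX := le_trans (miY_nonneg hp hκX) hIy_le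
    have heq : miYTib p κX = lam := by
      by_contra hne
      have hlt : lam < miYTib p κX := lt_of_le_of_ne hfe (Ne.symm hne)
      have hpos : 0 < miYTib p κX := lt_of_le_of_lt hlam0 hlt
      set α : ℝ := lam / miYTib p κX with hα
      have hα0 : 0 ≤ α := div_nonneg hlam0 hpos.le
      have hα1 : α < 1 := (div_lt_one hpos).mpr hlt
      have hch := isChannel_scale hp hκX hα0 hα1.le
      have hfeas2 : lam ≤ miYTib p (scaleCh p κX α) := by
        rw [miYTib_scale hp hκX hα0, hα, div_mul_cancel₀ _ hpos.ne']
      have h2 := hmin _ hch hfeas2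
      rw [miXTib_scale hp hκX hα0] at h2
      have hIxpos : 0 < miXTib p κX := lt_of_lt_of_le (lt_of_le_of_lt hlam0 hlt) hIy_le
      nlinarith [mul_pos (sub_pos.mpr hα1) hIxpos]
    refine ⟨by rw [klNY_eq hp hκX]; exact heq, ?_⟩
    intro κ' hκ' hfeas
    rw [klNY_eq hp hκ'] at hfeas
    have h3 := hmin κ' hκ' (le_of_eq hfeas.symm)
    rw [miNY_eq hp hκX, miNY_eq hp hκ', heq, hfeas]
    linarith
end
end

section
/- Let κ_X be a channel from X to T_ib and let q(x,y,t,y') := p(x,y) κ_X(t|x) δ_{y'=y} be the induced joint distribution on X×Y×T_ib×Y. Then, with κ := κ_X ⊗ e_Y: (a) D(κ(p(X,Y)) || κ(p(X)p(Y))) = I_q(T_ib;Y); and (b) I_q(X,Y;T_ib,Y') = I_q(X;T_ib) − I_q(Y;T_ib) + H(Y), where Y' denotes the copy-of-Y output coordinate and H(Y) is the Shannon entropy of p(Y). -/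
noncomputable section

/-- Shannon entropy `H(Y)` of the marginal `p(Y)`. -/
def entY {X Y : Type} [Fintype X] [Fintype Y] (p : X → Y → ℝ) : ℝ :=
  -∑ y, margY p y * Real.log (margY p y)



namespace IBAux

lemma sub_le_mul_log_div {x a : ℝ} (hx : 0 < x) (ha : 0 < a) :
    x - a ≤ x * Real.log (x / a) := by
  have h1 : Real.log (a / x) ≤ a / x - 1 := Real.log_le_sub_one_of_pos (by positivity)
  have h2 : Real.log (x / a) = - Real.log (a / x) := by
    rw [← Real.log_inv]; congr 1; field_simp
  have h3 : x * (a / x) = a := by field_simp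
  rw [h2]
  nlinarith [mul_le_mul_of_nonneg_left h1 hx.le]

lemma kl_summable {g h : ℕ → ℝ} {C : ℝ} (hC : 1 ≤ C)
    (hg0 : ∀ t, 0 ≤ g t) (hh0 : ∀ t, 0 ≤ h t)
    (hgh : ∀ t, g t ≤ C * h t) (hg : Summable g) (hh : Summable h) :
    Summable (fun t => g t * Real.log (g t / h t)) := by
  have hC0 : 0 < C := lt_of_lt_of_le one_pos hC
  have hlogC : 0 ≤ Real.log C := Real.log_nonneg hC
  have key : ∀ t, |g t * Real.log (g t / h t)| ≤ g t * Real.log C + h t := by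
    intro t
    rcases eq_or_lt_of_le (hg0 t) with h0 | h0
    · rw [← h0]; simp [hh0 t]
    · have hht : 0 < h t := by nlinarith [hgh t]
      have hub : g t * Real.log (g t / h t) ≤ g t * Real.log C := by
        apply mul_le_mul_of_nonneg_left _ h0.le
        exact Real.log_le_log (by positivity) (by rw [div_le_iff₀ hht]; nlinarith [hgh t])
      have hlb : g t - h t ≤ g t * Real.log (g t / h t) := sub_le_mul_log_div h0 hht
      rw [abs_le]
      constructor <;> nlinarith [mul_nonneg h0.le hlogC]
  exact Summable.of_abs (Summable.of_nonneg_of_le (fun t => abs_nonneg _) key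
    ((hg.mul_right (Real.log C)).add hh))

lemma summable_of_tsum_eq_one {f : ℕ → ℝ} (h1 : (∑' t, f t) = 1) : Summable f := by
  by_contra hcon
  rw [tsum_eq_zero_of_not_summable hcon] at h1
  norm_num at h1

lemma fix_inj {Y : Type} (y : Y) : Function.Injective (fun t : ℕ => ((t, y) : ℕ × Y)) :=
  fun a b hab => (Prod.ext_iff.mp hab).1

lemma fix_range {Y : Type} (y : Y) {f : ℕ × Y → ℝ} (hf : ∀ s : ℕ × Y, s.2 ≠ y → f s = 0) :
    ∀ s ∉ Set.range (fun t : ℕ => ((t, y) : ℕ × Y)), f s = 0 := by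
  intro s hs
  apply hf
  intro h2
  exact hs ⟨s.1, Prod.ext rfl h2.symm⟩

lemma tsum_prod_fix {Y : Type} (y : Y) (f : ℕ × Y → ℝ) (hf : ∀ s : ℕ × Y, s.2 ≠ y → f s = 0) :
    ∑' s : ℕ × Y, f s = ∑' t : ℕ, f (t, y) := by
  refine (Function.Injective.tsum_eq (fix_inj y) ?_).symm
  intro s hs
  by_contra hr
  exact hs ((fix_range y hf) s hr)

lemma summable_prod_fix {Y : Type} (y : Y) (f : ℕ × Y → ℝ)
    (hf : ∀ s : ℕ × Y, s.2 ≠ y → f s = 0) (h : Summable fun t => f (t, y)) :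
    Summable f :=
  (Function.Injective.summable_iff (fix_inj y) (fix_range y hf)).mp h

end IBAux

open IBAux in
/-- Let `κ_X` be a channel from `X` to `T_ib` and
`q(x,y,t,y') = p(x,y) κ_X(t|x) δ_{y'=y}` the induced joint distribution. Then, with
`κ = κ_X ⊗ e_Y`:
(a) `D(κ(p(X,Y)) ‖ κ(p(X)p(Y))) = I_q(T_ib;Y)`;
(b) `I_q(X,Y;T_ib,Y') = I_q(X;T_ib) − I_q(Y;T_ib) + H(Y)`. -/
theorem ib_kl_and_mi_identities {X Y : Type} [Fintype X] [Fintype Y] [DecidableEq Y]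
    (p : X → Y → ℝ) (hp : IsJointDist p)
    (κX : X → ℕ → ℝ) (hκX : IsChannelNat κX) :
    klNY (pushNY (jointW p) (tensIdY κX)) (pushNY (splitW p) (tensIdY κX))
      = miYTib p κX ∧
    miNY (jointW p) (tensIdY κX) = miXTib p κX - miYTib p κX + entY p := by
  obtain ⟨hp0, hp1⟩ := hp
  obtain ⟨hκ0, hκ1⟩ := hκX
  have hκs : ∀ x, Summable (κX x) := fun x => summable_of_tsum_eq_one (hκ1 x)
  have hκle : ∀ x t, κX x t ≤ 1 := fun x t =>
    (Summable.le_tsum (hκs x) t fun j _ => hκ0 x j).trans (hκ1 x).le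
  have hmX0 : ∀ x, 0 ≤ margX p x := fun x => Finset.sum_nonneg fun y _ => hp0 x y
  have hmY0 : ∀ y, 0 ≤ margY p y := fun y => Finset.sum_nonneg fun x _ => hp0 x y
  have hpX : ∀ x y, p x y ≤ margX p x := fun x y =>
    Finset.single_le_sum (fun y' _ => hp0 x y') (Finset.mem_univ y)
  have hpY : ∀ x y, p x y ≤ margY p y := fun x y =>
    Finset.single_le_sum (fun x' _ => hp0 x' y) (Finset.mem_univ x)
  have hmX1 : ∀ x, margX p x ≤ 1 := by
    intro x
    calc margX p x ≤ ∑ x', margX p x' :=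
          Finset.single_le_sum (fun x' _ => hmX0 x') (Finset.mem_univ x)
      _ = 1 := hp1
  have hmY1 : ∀ y, margY p y ≤ 1 := by
    intro y
    calc margY p y ≤ ∑ y', margY p y' :=
          Finset.single_le_sum (fun y' _ => hmY0 y') (Finset.mem_univ y)
      _ = 1 := by rw [← hp1]; exact (Finset.sum_comm)
  have hq0 : ∀ t y, (0:ℝ) ≤ ∑ x, p x y * κX x t := fun t y =>
    Finset.sum_nonneg fun x _ => mul_nonneg (hp0 x y) (hκ0 x t)
  have hm0 : ∀ t, 0 ≤ margTib p κX t := fun t =>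
    Finset.sum_nonneg fun x _ => mul_nonneg (hmX0 x) (hκ0 x t)
  have hqm : ∀ t y, (∑ x, p x y * κX x t) ≤ margTib p κX t := fun t y =>
    Finset.sum_le_sum fun x _ => mul_le_mul_of_nonneg_right (hpX x y) (hκ0 x t)
  have hκm : ∀ x t, margX p x * κX x t ≤ margTib p κX t := fun x t =>
    Finset.single_le_sum (fun x' _ => mul_nonneg (hmX0 x') (hκ0 x' t)) (Finset.mem_univ x)
  have hpκq : ∀ x y t, p x y * κX x t ≤ ∑ x', p x' y * κX x' t := fun x y t =>
    Finset.single_le_sum (fun x' _ => mul_nonneg (hp0 x' y) (hκ0 x' t)) (Finset.mem_univ x)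
  have hSm : Summable (margTib p κX) :=
    summable_sum (fun x _ => (hκs x).mul_left (margX p x))
  have hSq : ∀ y, Summable (fun t => ∑ x, p x y * κX x t) := fun y =>
    summable_sum (fun x _ => (hκs x).mul_left (p x y))
  -- summability of the I(Y;T) integrand, for each y
  have hSf : ∀ y, Summable (fun t => (∑ x, p x y * κX x t) *
      Real.log ((∑ x, p x y * κX x t) / (margY p y * margTib p κX t))) := by
    intro y
    rcases eq_or_lt_of_le (hmY0 y) with hc | hc
    · have hz : ∀ x, p x y = 0 := fun x => le_antisymm (by rw [hc]; exact hpY x y) (hp0 x y)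
      refine summable_congr (f := fun _ => (0:ℝ)) (fun t => ?_) |>.mp summable_zero
      simp [hz]
    · have hCc : 1 ≤ (margY p y)⁻¹ := by
        nlinarith [mul_inv_cancel₀ hc.ne', inv_nonneg.mpr (hmY0 y), hmY1 y]
      apply kl_summable hCc (hq0 · y) (fun t => mul_nonneg (hmY0 y) (hm0 t)) ?_ (hSq y)
        (hSm.mul_left (margY p y))
      intro t
      rw [inv_mul_cancel_left₀ hc.ne']
      exact hqm t y
  -- summability of the I(X;T) integrand, for each x
  have hSg : ∀ x, Summable (fun t => margX p x * κX x t *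
      Real.log (κX x t / margTib p κX t)) := by
    intro x
    rcases eq_or_lt_of_le (hmX0 x) with hc | hc
    · refine summable_congr (f := fun _ => (0:ℝ)) (fun t => ?_) |>.mp summable_zero
      rw [← hc]; ring
    · have hCc : 1 ≤ (margX p x)⁻¹ := by
        nlinarith [mul_inv_cancel₀ hc.ne', inv_nonneg.mpr (hmX0 x), hmX1 x]
      have h1 : Summable (fun t => (margX p x * κX x t) *
          Real.log ((margX p x * κX x t) / (margX p x * margTib p κX t))) := by
        apply kl_summable hCc (fun t => mul_nonneg (hmX0 x) (hκ0 x t))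
          (fun t => mul_nonneg (hmX0 x) (hm0 t)) ?_
          ((hκs x).mul_left (margX p x)) (hSm.mul_left (margX p x))
        intro t
        rw [inv_mul_cancel_left₀ hc.ne']
        exact hκm x t
      refine h1.congr fun t => ?_
      rw [mul_div_mul_left _ _ hc.ne']
  -- summability of the three pieces T1, T2, T3
  have hST1 : ∀ x y, Summable (fun t => p x y * κX x t *
      Real.log (κX x t / margTib p κX t)) := by
    intro x y
    apply Summable.of_abs
    refine Summable.of_nonneg_of_le (fun t => abs_nonneg _) (fun t => ?_) ((hSg x).abs)
    simp only [abs_mul, abs_of_nonneg (hp0 x y), abs_of_nonneg (hκ0 x t),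
      abs_of_nonneg (hmX0 x)]
    exact mul_le_mul_of_nonneg_right (mul_le_mul_of_nonneg_right (hpX x y) (hκ0 x t))
      (abs_nonneg _)
  have hST2 : ∀ x y, Summable (fun t => p x y * κX x t *
      Real.log ((∑ x', p x' y * κX x' t) / (margY p y * margTib p κX t))) := by
    intro x y
    apply Summable.of_abs
    refine Summable.of_nonneg_of_le (fun t => abs_nonneg _) (fun t => ?_) ((hSf y).abs)
    simp only [abs_mul, abs_of_nonneg (hp0 x y), abs_of_nonneg (hκ0 x t),
      abs_of_nonneg (hq0 t y)]
    exact mul_le_mul_of_nonneg_right (hpκq x y t) (abs_nonneg _)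
  have hST3 : ∀ x y, Summable (fun t => p x y * κX x t * Real.log (margY p y)) := by
    intro x y
    exact ((hκs x).mul_left (p x y)).mul_right (Real.log (margY p y))
  -- decomposition identity
  have hdecomp : ∀ x y t, p x y * κX x t * Real.log (κX x t / (∑ x', p x' y * κX x' t))
      = p x y * κX x t * Real.log (κX x t / margTib p κX t)
      - p x y * κX x t * Real.log ((∑ x', p x' y * κX x' t) / (margY p y * margTib p κX t))
      - p x y * κX x t * Real.log (margY p y) := by
    intro x y t
    rcases eq_or_lt_of_le (mul_nonneg (hp0 x y) (hκ0 x t)) with h0 | h0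
    · rw [← h0]; ring
    · have hp' : 0 < p x y := by
        rcases (mul_pos_iff.mp h0) with ⟨h, _⟩ | ⟨h, _⟩
        · exact h
        · exact absurd h (not_lt.mpr (hp0 x y))
      have hκ' : 0 < κX x t := by
        rcases (mul_pos_iff.mp h0) with ⟨_, h⟩ | ⟨_, h⟩
        · exact h
        · exact absurd h (not_lt.mpr (hκ0 x t))
      have hq' : 0 < ∑ x', p x' y * κX x' t := lt_of_lt_of_le h0 (hpκq x y t)
      have hm' : 0 < margTib p κX t :=
        lt_of_lt_of_le (lt_of_lt_of_le h0
          (mul_le_mul_of_nonneg_right (hpX x y) (hκ0 x t))) (hκm x t)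
      have hc' : 0 < margY p y := lt_of_lt_of_le hp' (hpY x y)
      rw [Real.log_div hκ'.ne' hq'.ne', Real.log_div hκ'.ne' hm'.ne',
        Real.log_div hq'.ne' (by positivity), Real.log_mul hc'.ne' hm'.ne']
      ring
  -- push values
  have hpushJ : ∀ s : ℕ × Y, pushNY (jointW p) (tensIdY κX) s = ∑ x, p x s.2 * κX x s.1 := by
    intro s
    rw [pushNY, Fintype.sum_prod_type]
    refine Finset.sum_congr rfl fun x _ => ?_
    simp only [jointW, tensIdY, mul_ite, mul_one, mul_zero]
    rw [Finset.sum_ite_eq]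
    simp [mul_comm]
  have hpushS : ∀ s : ℕ × Y, pushNY (splitW p) (tensIdY κX) s
      = margY p s.2 * margTib p κX s.1 := by
    intro s
    rw [pushNY, Fintype.sum_prod_type, margTib, Finset.mul_sum]
    refine Finset.sum_congr rfl fun x _ => ?_
    simp only [splitW, tensIdY, mul_ite, mul_one, mul_zero]
    rw [Finset.sum_ite_eq]
    simp
    ring
  constructor
  · -- part (a)
    rw [klNY]
    have hrw : ∀ s : ℕ × Y,
        pushNY (jointW p) (tensIdY κX) s *
          Real.log (pushNY (jointW p) (tensIdY κX) s / pushNY (splitW p) (tensIdY κX) s)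
        = ∑ y, (if s.2 = y then (∑ x, p x y * κX x s.1) *
            Real.log ((∑ x, p x y * κX x s.1) / (margY p y * margTib p κX s.1)) else 0) := by
      intro s
      rw [hpushJ, hpushS, Finset.sum_ite_eq]
      simp
    rw [tsum_congr hrw]
    rw [Summable.tsum_finsetSum (fun y _ => summable_prod_fix y _ (fun s hs => if_neg hs)
      (by simpa using hSf y))]
    refine Finset.sum_congr rfl fun y _ => ?_
    rw [tsum_prod_fix y _ (fun s hs => if_neg hs)]
    simp
  · -- part (b)
    rw [miNY]
    have hinner : ∀ a : X × Y,
        (∑' s : ℕ × Y, jointW p a * tensIdY κX a s *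
          Real.log (tensIdY κX a s / pushNY (jointW p) (tensIdY κX) s))
        = ∑' t, p a.1 a.2 * κX a.1 t * Real.log (κX a.1 t / (∑ x, p x a.2 * κX x t)) := by
      intro a
      rw [tsum_prod_fix a.2 _ (fun s hs => by simp [tensIdY, if_neg hs])]
      refine tsum_congr fun t => ?_
      rw [hpushJ]
      simp [tensIdY, jointW]
    calc (∑ a : X × Y, ∑' s : ℕ × Y, jointW p a * tensIdY κX a s *
            Real.log (tensIdY κX a s / pushNY (jointW p) (tensIdY κX) s))
        = ∑ x, ∑ y, ∑' t, p x y * κX x t * Real.log (κX x t / (∑ x', p x' y * κX x' t)) := by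
          rw [Fintype.sum_prod_type]
          exact Finset.sum_congr rfl fun x _ => Finset.sum_congr rfl fun y _ => hinner (x, y)
      _ = ∑ x, ∑ y, ((∑' t, p x y * κX x t * Real.log (κX x t / margTib p κX t))
            - (∑' t, p x y * κX x t *
                Real.log ((∑ x', p x' y * κX x' t) / (margY p y * margTib p κX t)))
            - (∑' t, p x y * κX x t * Real.log (margY p y))) := by
          refine Finset.sum_congr rfl fun x _ => Finset.sum_congr rfl fun y _ => ?_
          rw [tsum_congr (hdecomp x y), Summable.tsum_sub ((hST1 x y).sub (hST2 x y)) (hST3 x y),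
            Summable.tsum_sub (hST1 x y) (hST2 x y)]
      _ = miXTib p κX - miYTib p κX + entY p := by
          simp only [Finset.sum_sub_distrib]
          have e1 : (∑ x, ∑ y, ∑' t, p x y * κX x t * Real.log (κX x t / margTib p κX t))
              = miXTib p κX := by
            rw [miXTib]
            refine Finset.sum_congr rfl fun x _ => ?_
            rw [← Summable.tsum_finsetSum (fun y _ => hST1 x y)]
            refine tsum_congr fun t => ?_
            rw [← Finset.sum_mul, ← Finset.sum_mul]
            rfl
          have e2 : (∑ x, ∑ y, ∑' t, p x y * κX x t *
              Real.log ((∑ x', p x' y * κX x' t) / (margY p y * margTib p κX t)))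
              = miYTib p κX := by
            rw [miYTib, Finset.sum_comm]
            refine Finset.sum_congr rfl fun y _ => ?_
            rw [← Summable.tsum_finsetSum (fun x _ => hST2 x y)]
            refine tsum_congr fun t => ?_
            rw [← Finset.sum_mul]
          have e3 : (∑ x, ∑ y, ∑' t, p x y * κX x t * Real.log (margY p y))
              = - entY p := by
            rw [entY, neg_neg, Finset.sum_comm]
            refine Finset.sum_congr rfl fun y _ => ?_
            have : ∀ x, (∑' t, p x y * κX x t * Real.log (margY p y))
                = p x y * Real.log (margY p y) := by
              intro x
              have harr : (fun t => p x y * κX x t * Real.log (margY p y))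
                  = fun t => (p x y * Real.log (margY p y)) * κX x t := by
                funext t; ring
              rw [harr, tsum_mul_left, hκ1 x, mul_one]
            rw [Finset.sum_congr rfl fun x _ => this x, ← Finset.sum_mul]
            rfl
          rw [e1, e2, e3]
          ring
end
end

section
/- For every 0 ≤ λ ≤ I(X;Y), a split channel κ = κ_X ⊗ κ_Y solves the problem of minimising I_κ(X,Y;T) over channels κ ∈ C_sIB(X,Y) subject to D(κ(p(X,Y)) || κ(p(X)p(Y))) = λ, if and only if the pair (κ_X, κ_Y) solves the Symmetric Information Bottleneck problem: minimise I_q(X;T_X) + I_q(Y;T_Y) over pairs of channels q(T_X|X), q(T_Y|Y) subject to I_q(T_X;T_Y) ≥ λ, with joint distribution q(x,y,t_X,t_Y) = p(x,y) q(t_X|x) q(t_Y|y). -/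
noncomputable section

/-- The split channel `κ_X ⊗ κ_Y` from `X × Y` to `T_X × T_Y`. -/
def tens2 {X Y : Type} (κX : X → ℕ → ℝ) (κY : Y → ℕ → ℝ) : X × Y → ℕ × ℕ → ℝ :=
  fun a s => κX a.1 s.1 * κY a.2 s.2

/-- Pushforward of a weight `w` on `X × Y` through a channel to `T_X × T_Y`. -/
def push2 {X Y : Type} [Fintype X] [Fintype Y] (w : X × Y → ℝ)
    (κ : X × Y → ℕ × ℕ → ℝ) (s : ℕ × ℕ) : ℝ :=
  ∑ a : X × Y, w a * κ a s

/-- Kullback–Leibler divergence between distributions on `T_X × T_Y`. -/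
def klNN (u v : ℕ × ℕ → ℝ) : ℝ := ∑' s : ℕ × ℕ, u s * Real.log (u s / v s)

/-- Mutual information `I_κ(X,Y;T)` between the input (distributed as `w`) and the
output of a channel `κ` from `X × Y` to `T_X × T_Y`. -/
def mi2 {X Y : Type} [Fintype X] [Fintype Y] (w : X × Y → ℝ)
    (κ : X × Y → ℕ × ℕ → ℝ) : ℝ :=
  ∑ a : X × Y, ∑' s : ℕ × ℕ, w a * κ a s * Real.log (κ a s / push2 w κ s)

/-- Marginal `q(T_X)` of the joint `q(x,y,t_X,t_Y) = p(x,y) q(t_X|x) q(t_Y|y)`. -/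
def margTX {X Y : Type} [Fintype X] [Fintype Y] (p : X → Y → ℝ)
    (qX : X → ℕ → ℝ) (t : ℕ) : ℝ :=
  ∑ x, margX p x * qX x t

/-- Marginal `q(T_Y)` of the joint `q(x,y,t_X,t_Y) = p(x,y) q(t_X|x) q(t_Y|y)`. -/
def margTY {X Y : Type} [Fintype X] [Fintype Y] (p : X → Y → ℝ)
    (qY : Y → ℕ → ℝ) (t : ℕ) : ℝ :=
  ∑ y, margY p y * qY y t

/-- Marginal `q(T_X,T_Y)` of the joint `q(x,y,t_X,t_Y) = p(x,y) q(t_X|x) q(t_Y|y)`. -/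
def margTT {X Y : Type} [Fintype X] [Fintype Y] (p : X → Y → ℝ)
    (qX : X → ℕ → ℝ) (qY : Y → ℕ → ℝ) (s : ℕ × ℕ) : ℝ :=
  ∑ x, ∑ y, p x y * qX x s.1 * qY y s.2

/-- Mutual information `I_q(X;T_X)`. -/
def miXTX {X Y : Type} [Fintype X] [Fintype Y] (p : X → Y → ℝ)
    (qX : X → ℕ → ℝ) : ℝ :=
  ∑ x, ∑' t, margX p x * qX x t * Real.log (qX x t / margTX p qX t)

/-- Mutual information `I_q(Y;T_Y)`. -/
def miYTY {X Y : Type} [Fintype X] [Fintype Y] (p : X → Y → ℝ)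
    (qY : Y → ℕ → ℝ) : ℝ :=
  ∑ y, ∑' t, margY p y * qY y t * Real.log (qY y t / margTY p qY t)

/-- Mutual information `I_q(T_X;T_Y)`. -/
def miTT {X Y : Type} [Fintype X] [Fintype Y] (p : X → Y → ℝ)
    (qX : X → ℕ → ℝ) (qY : Y → ℕ → ℝ) : ℝ :=
  ∑' s : ℕ × ℕ, margTT p qX qY s *
    Real.log (margTT p qX qY s / (margTX p qX s.1 * margTY p qY s.2))

set_option linter.unusedSectionVars false

namespace SIBaux

lemma gibbs_pt {u v : ℝ} (hu : 0 ≤ u) (hv : 0 ≤ v) (h : v = 0 → u = 0) :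
    u - v ≤ u * Real.log (u / v) := by
  rcases eq_or_lt_of_le hu with h0 | h0
  · simp only [← h0, zero_mul, zero_sub, neg_nonpos]; exact hv
  · have hv0 : 0 < v := by
      rcases eq_or_lt_of_le hv with h1 | h1
      · exact absurd (h h1.symm) (ne_of_gt h0)
      · exact h1
    have h1 : Real.log (v / u) ≤ v / u - 1 := Real.log_le_sub_one_of_pos (by positivity)
    have h2 : Real.log (u / v) = - Real.log (v / u) := by
      rw [← Real.log_inv, inv_div]
    have h3 : u * Real.log (v / u) ≤ u * (v / u - 1) := mul_le_mul_of_nonneg_left h1 h0.le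
    have h4 : u * (v / u - 1) = v - u := by field_simp
    have h5 : u * Real.log (u / v) = -(u * Real.log (v / u)) := by rw [h2]; ring
    linarith

lemma log_ratio_le {u v c : ℝ} (hu : 0 ≤ u) (hc : 1 ≤ c) (hcv : u ≤ c * v) :
    u * Real.log (u / v) ≤ u * Real.log c := by
  rcases eq_or_lt_of_le hu with h0 | h0
  · simp [← h0]
  · have hv : 0 < v := by nlinarith
    have hdc : u / v ≤ c := (div_le_iff₀ hv).2 (by nlinarith)
    have hlog : Real.log (u / v) ≤ Real.log c := Real.log_le_log (by positivity) hdc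
    exact mul_le_mul_of_nonneg_left hlog h0.le

lemma summable_between {ι : Type*} {f l u : ι → ℝ} (hl : Summable l) (hu : Summable u)
    (h1 : ∀ i, l i ≤ f i) (h2 : ∀ i, f i ≤ u i) : Summable f := by
  refine summable_abs_iff.mp (Summable.of_nonneg_of_le (fun i => abs_nonneg _)
    (fun i => ?_) (hl.abs.add hu.abs))
  refine abs_le.mpr ⟨?_, ?_⟩
  · have := neg_abs_le (l i); have := h1 i; have := abs_nonneg (u i); linarith
  · have := le_abs_self (u i); have := h2 i; have := abs_nonneg (l i); linarith

end SIBaux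
namespace SIBaux

variable {X Y : Type} [Fintype X] [Fintype Y]

lemma margX_nonneg (p : X → Y → ℝ) (hp : IsJointDist p) (x : X) : 0 ≤ margX p x :=
  Finset.sum_nonneg fun y _ => hp.1 x y

lemma margY_nonneg (p : X → Y → ℝ) (hp : IsJointDist p) (y : Y) : 0 ≤ margY p y :=
  Finset.sum_nonneg fun x _ => hp.1 x y

lemma le_margX (p : X → Y → ℝ) (hp : IsJointDist p) (x : X) (y : Y) : p x y ≤ margX p x :=
  Finset.single_le_sum (fun y _ => hp.1 x y) (Finset.mem_univ y)

lemma le_margY (p : X → Y → ℝ) (hp : IsJointDist p) (x : X) (y : Y) : p x y ≤ margY p y :=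
  Finset.single_le_sum (fun x _ => hp.1 x y) (Finset.mem_univ x)

lemma sum_margX (p : X → Y → ℝ) (hp : IsJointDist p) : ∑ x, margX p x = 1 := hp.2

lemma margX_le_one (p : X → Y → ℝ) (hp : IsJointDist p) (x : X) : margX p x ≤ 1 := by
  rw [← sum_margX p hp]
  exact Finset.single_le_sum (fun x _ => margX_nonneg p hp x) (Finset.mem_univ x)

lemma chan_summable {A : Type} {q : A → ℕ → ℝ} (hq : IsChannelNat q) (a : A) :
    Summable (q a) := by
  by_contra h
  have := tsum_eq_zero_of_not_summable h
  rw [hq.2 a] at this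
  norm_num at this

lemma chan_le_one {A : Type} {q : A → ℕ → ℝ} (hq : IsChannelNat q) (a : A) (t : ℕ) :
    q a t ≤ 1 := by
  have := Summable.le_tsum (chan_summable hq a) t (fun j _ => hq.1 a j)
  rwa [hq.2 a] at this

lemma margTX_nonneg (p : X → Y → ℝ) (hp : IsJointDist p) {qX : X → ℕ → ℝ}
    (hqX : IsChannelNat qX) (t : ℕ) : 0 ≤ margTX p qX t :=
  Finset.sum_nonneg fun x _ => mul_nonneg (margX_nonneg p hp x) (hqX.1 x t)

lemma le_margTX (p : X → Y → ℝ) (hp : IsJointDist p) {qX : X → ℕ → ℝ}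
    (hqX : IsChannelNat qX) (x : X) (t : ℕ) : margX p x * qX x t ≤ margTX p qX t :=
  Finset.single_le_sum (fun x _ => mul_nonneg (margX_nonneg p hp x) (hqX.1 x t))
    (Finset.mem_univ x)

lemma summable_margTX (p : X → Y → ℝ) {qX : X → ℕ → ℝ} (hqX : IsChannelNat qX) :
    Summable (margTX p qX) :=
  summable_sum fun x _ => (chan_summable hqX x).mul_left (margX p x)

lemma tsum_margTX (p : X → Y → ℝ) (hp : IsJointDist p) {qX : X → ℕ → ℝ}
    (hqX : IsChannelNat qX) : ∑' t, margTX p qX t = 1 := by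
  unfold margTX
  rw [Summable.tsum_finsetSum fun x _ => (chan_summable hqX x).mul_left (margX p x)]
  have h : ∀ x : X, ∑' t, margX p x * qX x t = margX p x := by
    intro x; rw [tsum_mul_left, hqX.2 x, mul_one]
  rw [Finset.sum_congr rfl fun x _ => h x]
  exact hp.2

end SIBaux
namespace SIBaux
variable {X Y : Type} [Fintype X] [Fintype Y]

lemma margTT_nonneg (p : X → Y → ℝ) (hp : IsJointDist p) {qX : X → ℕ → ℝ} {qY : Y → ℕ → ℝ}
    (hqX : IsChannelNat qX) (hqY : IsChannelNat qY) (s : ℕ × ℕ) :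
    0 ≤ margTT p qX qY s :=
  Finset.sum_nonneg fun x _ => Finset.sum_nonneg fun y _ =>
    mul_nonneg (mul_nonneg (hp.1 x y) (hqX.1 x s.1)) (hqY.1 y s.2)

lemma le_margTT (p : X → Y → ℝ) (hp : IsJointDist p) {qX : X → ℕ → ℝ} {qY : Y → ℕ → ℝ}
    (hqX : IsChannelNat qX) (hqY : IsChannelNat qY) (x : X) (y : Y) (s : ℕ × ℕ) :
    p x y * qX x s.1 * qY y s.2 ≤ margTT p qX qY s := by
  unfold margTT
  have h1 : ∀ x' : X, (0:ℝ) ≤ ∑ y', p x' y' * qX x' s.1 * qY y' s.2 :=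
    fun x' => Finset.sum_nonneg fun y' _ =>
      mul_nonneg (mul_nonneg (hp.1 x' y') (hqX.1 x' s.1)) (hqY.1 y' s.2)
  calc p x y * qX x s.1 * qY y s.2
      ≤ ∑ y', p x y' * qX x s.1 * qY y' s.2 :=
        Finset.single_le_sum (fun y' _ =>
          mul_nonneg (mul_nonneg (hp.1 x y') (hqX.1 x s.1)) (hqY.1 y' s.2)) (Finset.mem_univ y)
    _ ≤ ∑ x', ∑ y', p x' y' * qX x' s.1 * qY y' s.2 :=
        Finset.single_le_sum (fun x' _ => h1 x') (Finset.mem_univ x)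

lemma summable_pair {x : X} {y : Y} {qX : X → ℕ → ℝ} {qY : Y → ℕ → ℝ}
    (hqX : IsChannelNat qX) (hqY : IsChannelNat qY) :
    Summable (fun s : ℕ × ℕ => qX x s.1 * qY y s.2) :=
  (chan_summable hqX x).mul_of_nonneg (chan_summable hqY y) (fun t => hqX.1 x t)
    (fun t => hqY.1 y t)

lemma tsum_pair {x : X} {y : Y} {qX : X → ℕ → ℝ} {qY : Y → ℕ → ℝ}
    (hqX : IsChannelNat qX) (hqY : IsChannelNat qY) :
    ∑' s : ℕ × ℕ, qX x s.1 * qY y s.2 = 1 := by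
  rw [Summable.tsum_prod (summable_pair hqX hqY)]
  simp only
  have h : ∀ t1 : ℕ, ∑' t2, qX x t1 * qY y t2 = qX x t1 := by
    intro t1; rw [tsum_mul_left, hqY.2 y, mul_one]
  rw [tsum_congr h, hqX.2 x]

lemma summable_margTT (p : X → Y → ℝ) {qX : X → ℕ → ℝ} {qY : Y → ℕ → ℝ}
    (hqX : IsChannelNat qX) (hqY : IsChannelNat qY) :
    Summable (margTT p qX qY) := by
  unfold margTT
  refine summable_sum fun x _ => summable_sum fun y _ => ?_
  have := ((summable_pair (x := x) (y := y) hqX hqY).mul_left (p x y))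
  simpa [mul_assoc] using this

lemma tsum_margTT (p : X → Y → ℝ) (hp : IsJointDist p) {qX : X → ℕ → ℝ} {qY : Y → ℕ → ℝ}
    (hqX : IsChannelNat qX) (hqY : IsChannelNat qY) :
    ∑' s, margTT p qX qY s = 1 := by
  unfold margTT
  have hsxy : ∀ (x : X) (y : Y), Summable (fun s : ℕ × ℕ => p x y * qX x s.1 * qY y s.2) := by
    intro x y
    simpa [mul_assoc] using ((summable_pair (x := x) (y := y) hqX hqY).mul_left (p x y))
  rw [Summable.tsum_finsetSum fun x _ => summable_sum fun y _ => hsxy x y]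
  have h : ∀ x : X, ∑' s : ℕ × ℕ, ∑ y, p x y * qX x s.1 * qY y s.2
      = ∑ y, p x y := by
    intro x
    rw [Summable.tsum_finsetSum fun y _ => hsxy x y]
    refine Finset.sum_congr rfl fun y _ => ?_
    calc ∑' s : ℕ × ℕ, p x y * qX x s.1 * qY y s.2
        = ∑' s : ℕ × ℕ, p x y * (qX x s.1 * qY y s.2) := by
          exact tsum_congr fun s => by ring
      _ = p x y * 1 := by rw [tsum_mul_left, tsum_pair hqX hqY]
      _ = p x y := mul_one _
  rw [Finset.sum_congr rfl fun x _ => h x]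
  exact hp.2

end SIBaux
namespace SIBaux
variable {X Y : Type} [Fintype X] [Fintype Y]

lemma push2_jointW (p : X → Y → ℝ) (qX : X → ℕ → ℝ) (qY : Y → ℕ → ℝ) :
    push2 (jointW p) (tens2 qX qY) = margTT p qX qY := by
  funext s
  unfold push2 jointW tens2 margTT
  rw [Fintype.sum_prod_type]
  exact Finset.sum_congr rfl fun x _ => Finset.sum_congr rfl fun y _ => by ring

lemma push2_splitW (p : X → Y → ℝ) (qX : X → ℕ → ℝ) (qY : Y → ℕ → ℝ) (s : ℕ × ℕ) :
    push2 (splitW p) (tens2 qX qY) s = margTX p qX s.1 * margTY p qY s.2 := by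
  unfold push2 splitW tens2 margTX margTY
  rw [Finset.sum_mul_sum, Fintype.sum_prod_type]
  exact Finset.sum_congr rfl fun x _ => Finset.sum_congr rfl fun y _ => by ring

lemma kl_eq (p : X → Y → ℝ) (qX : X → ℕ → ℝ) (qY : Y → ℕ → ℝ) :
    klNN (push2 (jointW p) (tens2 qX qY)) (push2 (splitW p) (tens2 qX qY))
      = miTT p qX qY := by
  unfold klNN miTT
  exact tsum_congr fun s => by rw [push2_jointW, push2_splitW]

end SIBaux
namespace SIBaux
variable {X Y : Type} [Fintype X] [Fintype Y]

lemma jd_swap (p : X → Y → ℝ) (hp : IsJointDist p) : IsJointDist (fun y x => p x y) :=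
  ⟨fun y x => hp.1 x y, by rw [Finset.sum_comm]; exact hp.2⟩

lemma margX_swap (p : X → Y → ℝ) : margX (fun y x => p x y) = margY p := rfl

lemma margTX_swap (p : X → Y → ℝ) (qY : Y → ℕ → ℝ) :
    margTX (fun y x => p x y) qY = margTY p qY := rfl

lemma margTY_swap (p : X → Y → ℝ) (qX : X → ℕ → ℝ) :
    margTY (fun y x => p x y) qX = margTX p qX := rfl

lemma miXTX_swap (p : X → Y → ℝ) (qY : Y → ℕ → ℝ) :
    miXTX (fun y x => p x y) qY = miYTY p qY := rfl

lemma margTT_swap (p : X → Y → ℝ) (qX : X → ℕ → ℝ) (qY : Y → ℕ → ℝ) (a b : ℕ) :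
    margTT (fun y x => p x y) qY qX (b, a) = margTT p qX qY (a, b) := by
  unfold margTT
  rw [Finset.sum_comm]
  exact Finset.sum_congr rfl fun x _ => Finset.sum_congr rfl fun y _ => by ring

lemma miTT_swap (p : X → Y → ℝ) (qX : X → ℕ → ℝ) (qY : Y → ℕ → ℝ) :
    miTT (fun y x => p x y) qY qX = miTT p qX qY := by
  unfold miTT
  rw [← Equiv.tsum_eq (Equiv.prodComm ℕ ℕ)]
  refine tsum_congr fun s => ?_
  obtain ⟨a, b⟩ := s
  simp only [Equiv.prodComm_apply, Prod.swap_prod_mk]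
  rw [margTT_swap]
  congr 2
  rw [mul_comm (margTX p qX a)]
  rfl

end SIBaux
namespace SIBaux
variable {X Y : Type} [Fintype X] [Fintype Y]

lemma summable_qlog (p : X → Y → ℝ) (hp : IsJointDist p) {qX : X → ℕ → ℝ}
    (hqX : IsChannelNat qX) (x : X) {c : ℝ} (hc : 0 ≤ c) (hcle : c ≤ margX p x) :
    Summable (fun t => c * qX x t * Real.log (qX x t / margTX p qX t)) := by
  rcases eq_or_lt_of_le hc with h0 | h0
  · simp only [← h0, zero_mul]; exact summable_zero
  · have hmx : 0 < margX p x := lt_of_lt_of_le h0 hcle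
    have key : ∀ t, margX p x * qX x t ≤ margTX p qX t := le_margTX p hp hqX x
    have hvu : ∀ t, margTX p qX t = 0 → qX x t = 0 := by
      intro t ht
      have h1 := key t
      rw [ht] at h1
      nlinarith [hqX.1 x t, margTX_nonneg p hp hqX t]
    refine summable_between (l := fun t => c * (qX x t - margTX p qX t))
      (u := fun t => c * (qX x t * Real.log (margX p x)⁻¹))
      (((chan_summable hqX x).sub (summable_margTX p hqX)).mul_left c)
      (((chan_summable hqX x).mul_right _).mul_left c) (fun t => ?_) (fun t => ?_)
    · have := gibbs_pt (hqX.1 x t) (margTX_nonneg p hp hqX t) (hvu t)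
      have h2 := mul_le_mul_of_nonneg_left this hc
      calc c * (qX x t - margTX p qX t) ≤ c * (qX x t * Real.log (qX x t / margTX p qX t)) := h2
        _ = c * qX x t * Real.log (qX x t / margTX p qX t) := by ring
    · have hc1 : (1:ℝ) ≤ (margX p x)⁻¹ := by
        have := margX_le_one p hp x
        have h9 : margX p x * (margX p x)⁻¹ = 1 := mul_inv_cancel₀ (ne_of_gt hmx)
        nlinarith [inv_nonneg.mpr hmx.le]
      have hcv : qX x t ≤ (margX p x)⁻¹ * margTX p qX t := by
        rw [inv_mul_eq_div, le_div_iff₀ hmx]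
        calc qX x t * margX p x = margX p x * qX x t := by ring
          _ ≤ margTX p qX t := key t
      have := log_ratio_le (hqX.1 x t) hc1 hcv
      have h2 := mul_le_mul_of_nonneg_left this hc
      calc c * qX x t * Real.log (qX x t / margTX p qX t)
          = c * (qX x t * Real.log (qX x t / margTX p qX t)) := by ring
        _ ≤ c * (qX x t * Real.log (margX p x)⁻¹) := h2

lemma tsum_qlog_nonneg (p : X → Y → ℝ) (hp : IsJointDist p) {qX : X → ℕ → ℝ}
    (hqX : IsChannelNat qX) (x : X) :
    0 ≤ ∑' t, margX p x * qX x t * Real.log (qX x t / margTX p qX t) := by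
  have hl : Summable (fun t => margX p x * (qX x t - margTX p qX t)) :=
    ((chan_summable hqX x).sub (summable_margTX p hqX)).mul_left _
  have hf := summable_qlog p hp hqX x (margX_nonneg p hp x) (le_refl _)
  have hle : ∀ t, margX p x * (qX x t - margTX p qX t)
      ≤ margX p x * qX x t * Real.log (qX x t / margTX p qX t) := by
    intro t
    rcases eq_or_lt_of_le (margX_nonneg p hp x) with h0 | h0
    · simp [← h0]
    · have key := le_margTX p hp hqX x t
      have hvu : margTX p qX t = 0 → qX x t = 0 := by
        intro ht; rw [ht] at key
        nlinarith [hqX.1 x t, margTX_nonneg p hp hqX t]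
      have := gibbs_pt (hqX.1 x t) (margTX_nonneg p hp hqX t) hvu
      have h2 := mul_le_mul_of_nonneg_left this h0.le
      calc margX p x * (qX x t - margTX p qX t)
          ≤ margX p x * (qX x t * Real.log (qX x t / margTX p qX t)) := h2
        _ = margX p x * qX x t * Real.log (qX x t / margTX p qX t) := by ring
  have h1 := Summable.tsum_le_tsum hle hl hf
  have h2 : ∑' t, margX p x * (qX x t - margTX p qX t) = 0 := by
    rw [tsum_mul_left, Summable.tsum_sub (chan_summable hqX x) (summable_margTX p hqX),
      hqX.2 x, tsum_margTX p hp hqX]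
    ring
  linarith

lemma miXTX_nonneg (p : X → Y → ℝ) (hp : IsJointDist p) {qX : X → ℕ → ℝ}
    (hqX : IsChannelNat qX) : 0 ≤ miXTX p qX :=
  Finset.sum_nonneg fun x _ => tsum_qlog_nonneg p hp hqX x

lemma miYTY_nonneg (p : X → Y → ℝ) (hp : IsJointDist p) {qY : Y → ℕ → ℝ}
    (hqY : IsChannelNat qY) : 0 ≤ miYTY p qY := by
  rw [← miXTX_swap]
  exact miXTX_nonneg _ (jd_swap p hp) hqY

end SIBaux
namespace SIBaux
variable {X Y : Type} [Fintype X] [Fintype Y]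

lemma F_pt (p : X → Y → ℝ) (qX : X → ℕ → ℝ) (qY : Y → ℕ → ℝ) (x : X) (y : Y) (s : ℕ × ℕ) :
    p x y * (qX x s.1 * qY y s.2) * Real.log ((qX x s.1 * qY y s.2) / margTT p qX qY s)
    = (p x y * (qX x s.1 * qY y s.2)) *
        Real.log ((p x y * (qX x s.1 * qY y s.2)) / (p x y * margTT p qX qY s)) := by
  by_cases h : p x y = 0
  · simp [h]
  · rw [mul_div_mul_left _ _ h]

lemma F_facts (p : X → Y → ℝ) (hp : IsJointDist p) {qX : X → ℕ → ℝ} {qY : Y → ℕ → ℝ}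
    (hqX : IsChannelNat qX) (hqY : IsChannelNat qY) (x : X) (y : Y) :
    Summable (fun s : ℕ × ℕ =>
      p x y * (qX x s.1 * qY y s.2) * Real.log ((qX x s.1 * qY y s.2) / margTT p qX qY s))
    ∧ 0 ≤ ∑' s : ℕ × ℕ,
      p x y * (qX x s.1 * qY y s.2) * Real.log ((qX x s.1 * qY y s.2) / margTT p qX qY s) := by
  by_cases hpxy : p x y = 0
  · constructor
    · simp only [hpxy, zero_mul]; exact summable_zero
    · simp [hpxy]
  have hppos : 0 < p x y := lt_of_le_of_ne (hp.1 x y) (Ne.symm hpxy)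
  have hple : p x y ≤ 1 := le_trans (le_margX p hp x y) (margX_le_one p hp x)
  have hU : Summable (fun s : ℕ × ℕ => p x y * (qX x s.1 * qY y s.2)) :=
    (summable_pair hqX hqY).mul_left _
  have hV : Summable (fun s : ℕ × ℕ => p x y * margTT p qX qY s) :=
    (summable_margTT p hqX hqY).mul_left _
  have hU0 : ∀ s : ℕ × ℕ, 0 ≤ p x y * (qX x s.1 * qY y s.2) := fun s =>
    mul_nonneg (hp.1 x y) (mul_nonneg (hqX.1 x s.1) (hqY.1 y s.2))
  have hUm : ∀ s : ℕ × ℕ, p x y * (qX x s.1 * qY y s.2) ≤ margTT p qX qY s := by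
    intro s
    have := le_margTT p hp hqX hqY x y s
    calc p x y * (qX x s.1 * qY y s.2) = p x y * qX x s.1 * qY y s.2 := by ring
      _ ≤ margTT p qX qY s := this
  have hc1 : (1:ℝ) ≤ (p x y)⁻¹ := by
    have h9 : p x y * (p x y)⁻¹ = 1 := mul_inv_cancel₀ hpxy
    nlinarith [inv_nonneg.mpr hppos.le]
  have hlow : ∀ s : ℕ × ℕ,
      p x y * (qX x s.1 * qY y s.2) - p x y * margTT p qX qY s
      ≤ p x y * (qX x s.1 * qY y s.2) * Real.log ((qX x s.1 * qY y s.2) / margTT p qX qY s) := by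
    intro s
    rw [F_pt]
    refine gibbs_pt (hU0 s) (mul_nonneg hppos.le (margTT_nonneg p hp hqX hqY s)) ?_
    intro hv
    have : margTT p qX qY s = 0 := by
      rcases mul_eq_zero.mp hv with h | h
      · exact absurd h hpxy
      · exact h
    have h8 := hUm s
    rw [this] at h8
    nlinarith [hU0 s]
  have hup : ∀ s : ℕ × ℕ,
      p x y * (qX x s.1 * qY y s.2) * Real.log ((qX x s.1 * qY y s.2) / margTT p qX qY s)
      ≤ p x y * (qX x s.1 * qY y s.2) * Real.log (p x y)⁻¹ := by
    intro s
    rw [F_pt]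
    refine log_ratio_le (hU0 s) hc1 ?_
    calc p x y * (qX x s.1 * qY y s.2) ≤ margTT p qX qY s := hUm s
      _ = (p x y)⁻¹ * (p x y * margTT p qX qY s) := by
          field_simp
  have hsum : Summable (fun s : ℕ × ℕ =>
      p x y * (qX x s.1 * qY y s.2) * Real.log ((qX x s.1 * qY y s.2) / margTT p qX qY s)) :=
    summable_between (hU.sub hV) (hU.mul_right _) hlow hup
  refine ⟨hsum, ?_⟩
  have h1 := Summable.tsum_le_tsum hlow (hU.sub hV) hsum
  have h2 : ∑' s : ℕ × ℕ, (p x y * (qX x s.1 * qY y s.2) - p x y * margTT p qX qY s) = 0 := by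
    rw [Summable.tsum_sub hU hV, tsum_mul_left, tsum_mul_left, tsum_pair hqX hqY,
      tsum_margTT p hp hqX hqY]
    ring
  linarith

end SIBaux
namespace SIBaux
variable {X Y : Type} [Fintype X] [Fintype Y]

lemma margTY_nonneg (p : X → Y → ℝ) (hp : IsJointDist p) {qY : Y → ℕ → ℝ}
    (hqY : IsChannelNat qY) (t : ℕ) : 0 ≤ margTY p qY t :=
  margTX_nonneg (fun y x => p x y) (jd_swap p hp) hqY t

lemma le_margTY (p : X → Y → ℝ) (hp : IsJointDist p) {qY : Y → ℕ → ℝ}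
    (hqY : IsChannelNat qY) (y : Y) (t : ℕ) : margY p y * qY y t ≤ margTY p qY t :=
  le_margTX (fun y x => p x y) (jd_swap p hp) hqY y t

lemma summable_margTY (p : X → Y → ℝ) {qY : Y → ℕ → ℝ} (hqY : IsChannelNat qY) :
    Summable (margTY p qY) :=
  summable_margTX (fun y x => p x y) hqY

/-- The `fA` summand. -/
def fA (p : X → Y → ℝ) (qX : X → ℕ → ℝ) (qY : Y → ℕ → ℝ) (x : X) (y : Y) (s : ℕ × ℕ) : ℝ :=
  p x y * qX x s.1 * qY y s.2 * Real.log (qX x s.1 / margTX p qX s.1)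

def fB (p : X → Y → ℝ) (qX : X → ℕ → ℝ) (qY : Y → ℕ → ℝ) (x : X) (y : Y) (s : ℕ × ℕ) : ℝ :=
  p x y * qX x s.1 * qY y s.2 * Real.log (qY y s.2 / margTY p qY s.2)

def fC (p : X → Y → ℝ) (qX : X → ℕ → ℝ) (qY : Y → ℕ → ℝ) (x : X) (y : Y) (s : ℕ × ℕ) : ℝ :=
  p x y * qX x s.1 * qY y s.2 *
    Real.log (margTT p qX qY s / (margTX p qX s.1 * margTY p qY s.2))

def fF (p : X → Y → ℝ) (qX : X → ℕ → ℝ) (qY : Y → ℕ → ℝ) (x : X) (y : Y) (s : ℕ × ℕ) : ℝ :=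
  p x y * (qX x s.1 * qY y s.2) * Real.log ((qX x s.1 * qY y s.2) / margTT p qX qY s)

lemma fA_facts (p : X → Y → ℝ) (hp : IsJointDist p) {qX : X → ℕ → ℝ} {qY : Y → ℕ → ℝ}
    (hqX : IsChannelNat qX) (hqY : IsChannelNat qY) (x : X) (y : Y) :
    Summable (fA p qX qY x y) ∧
      ∑' s, fA p qX qY x y s = ∑' t, p x y * qX x t * Real.log (qX x t / margTX p qX t) := by
  set g : ℕ → ℝ := fun t => p x y * qX x t * Real.log (qX x t / margTX p qX t) with hgdef
  have hg : Summable g := summable_qlog p hp hqX x (hp.1 x y) (le_margX p hp x y)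
  have hfg : ∀ s : ℕ × ℕ, fA p qX qY x y s = g s.1 * qY y s.2 := by
    intro s; simp only [fA, hgdef]; ring
  have habs : Summable (fun s : ℕ × ℕ => |g s.1| * qY y s.2) :=
    hg.abs.mul_of_nonneg (chan_summable hqY y) (fun t => abs_nonneg _) (fun t => hqY.1 y t)
  have hsum : Summable (fA p qX qY x y) := by
    refine summable_abs_iff.mp ?_
    have : (fun s : ℕ × ℕ => |fA p qX qY x y s|) = fun s => |g s.1| * qY y s.2 := by
      funext s
      rw [hfg s, abs_mul, abs_of_nonneg (hqY.1 y s.2)]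
    rw [this]; exact habs
  refine ⟨hsum, ?_⟩
  rw [tsum_congr hfg, Summable.tsum_prod (by rw [← funext hfg]  ; exact hsum)]
  refine tsum_congr fun t1 => ?_
  have h2 : ∑' c, g t1 * qY y c = g t1 * ∑' c, qY y c := tsum_mul_left
  rw [hqY.2 y, mul_one] at h2
  exact h2

lemma fB_facts (p : X → Y → ℝ) (hp : IsJointDist p) {qX : X → ℕ → ℝ} {qY : Y → ℕ → ℝ}
    (hqX : IsChannelNat qX) (hqY : IsChannelNat qY) (x : X) (y : Y) :
    Summable (fB p qX qY x y) ∧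
      ∑' s, fB p qX qY x y s = ∑' t, p x y * qY y t * Real.log (qY y t / margTY p qY t) := by
  set g : ℕ → ℝ := fun t => p x y * qY y t * Real.log (qY y t / margTY p qY t) with hgdef
  have hg : Summable g := by
    have := summable_qlog (fun y x => p x y) (jd_swap p hp) hqY y (hp.1 x y)
      (le_margX (fun y x => p x y) (jd_swap p hp) y x)
    exact this
  have hfg : ∀ s : ℕ × ℕ, fB p qX qY x y s = qX x s.1 * g s.2 := by
    intro s; simp only [fB, hgdef]; ring
  have habs : Summable (fun s : ℕ × ℕ => qX x s.1 * |g s.2|) :=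
    (chan_summable hqX x).mul_of_nonneg hg.abs (fun t => hqX.1 x t) (fun t => abs_nonneg _)
  have hsum : Summable (fB p qX qY x y) := by
    refine summable_abs_iff.mp ?_
    have : (fun s : ℕ × ℕ => |fB p qX qY x y s|) = fun s => qX x s.1 * |g s.2| := by
      funext s
      rw [hfg s, abs_mul, abs_of_nonneg (hqX.1 x s.1)]
    rw [this]; exact habs
  refine ⟨hsum, ?_⟩
  rw [tsum_congr hfg, Summable.tsum_prod (by rw [← funext hfg]; exact hsum)]
  have h1 : ∀ t1 : ℕ, ∑' c : ℕ, qX x ((t1, c) : ℕ × ℕ).1 * g ((t1, c) : ℕ × ℕ).2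
      = qX x t1 * ∑' c, g c := by
    intro t1
    have he : (fun c : ℕ => qX x ((t1, c) : ℕ × ℕ).1 * g ((t1, c) : ℕ × ℕ).2)
        = fun c => qX x t1 * g c := rfl
    rw [he, tsum_mul_left]
  rw [tsum_congr h1, tsum_mul_right, hqX.2 x, one_mul]

lemma split_pt (p : X → Y → ℝ) (hp : IsJointDist p) {qX : X → ℕ → ℝ} {qY : Y → ℕ → ℝ}
    (hqX : IsChannelNat qX) (hqY : IsChannelNat qY) (x : X) (y : Y) (s : ℕ × ℕ) :
    fF p qX qY x y s = fA p qX qY x y s + fB p qX qY x y s - fC p qX qY x y s := by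
  unfold fF fA fB fC
  by_cases hpxy : p x y = 0
  · simp [hpxy]
  by_cases hqx : qX x s.1 = 0
  · simp [hqx]
  by_cases hqy : qY y s.2 = 0
  · simp [hqy]
  have hppos : 0 < p x y := lt_of_le_of_ne (hp.1 x y) (Ne.symm hpxy)
  have hqxpos : 0 < qX x s.1 := lt_of_le_of_ne (hqX.1 x s.1) (Ne.symm hqx)
  have hqypos : 0 < qY y s.2 := lt_of_le_of_ne (hqY.1 y s.2) (Ne.symm hqy)
  have hTX : 0 < margTX p qX s.1 :=
    lt_of_lt_of_le (mul_pos (lt_of_lt_of_le hppos (le_margX p hp x y)) hqxpos)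
      (le_margTX p hp hqX x s.1)
  have hTY : 0 < margTY p qY s.2 :=
    lt_of_lt_of_le (mul_pos (lt_of_lt_of_le hppos (le_margY p hp x y)) hqypos)
      (le_margTY p hp hqY y s.2)
  have hTT : 0 < margTT p qX qY s :=
    lt_of_lt_of_le (by positivity) (le_margTT p hp hqX hqY x y s)
  rw [Real.log_div (mul_ne_zero (ne_of_gt hqxpos) (ne_of_gt hqypos)) (ne_of_gt hTT),
    Real.log_mul (ne_of_gt hqxpos) (ne_of_gt hqypos),
    Real.log_div (ne_of_gt hqxpos) (ne_of_gt hTX),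
    Real.log_div (ne_of_gt hqypos) (ne_of_gt hTY),
    Real.log_div (ne_of_gt hTT) (mul_ne_zero (ne_of_gt hTX) (ne_of_gt hTY)),
    Real.log_mul (ne_of_gt hTX) (ne_of_gt hTY)]
  ring


end SIBaux
namespace SIBaux
variable {X Y : Type} [Fintype X] [Fintype Y]

lemma fF_facts (p : X → Y → ℝ) (hp : IsJointDist p) {qX : X → ℕ → ℝ} {qY : Y → ℕ → ℝ}
    (hqX : IsChannelNat qX) (hqY : IsChannelNat qY) (x : X) (y : Y) :
    Summable (fF p qX qY x y) ∧ 0 ≤ ∑' s, fF p qX qY x y s :=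
  F_facts p hp hqX hqY x y

lemma fC_summable (p : X → Y → ℝ) (hp : IsJointDist p) {qX : X → ℕ → ℝ} {qY : Y → ℕ → ℝ}
    (hqX : IsChannelNat qX) (hqY : IsChannelNat qY) (x : X) (y : Y) :
    Summable (fC p qX qY x y) := by
  have h : fC p qX qY x y = fun s => fA p qX qY x y s + fB p qX qY x y s - fF p qX qY x y s := by
    funext s
    rw [split_pt p hp hqX hqY x y s]
    ring
  rw [h]
  exact ((fA_facts p hp hqX hqY x y).1.add (fB_facts p hp hqX hqY x y).1).sub
    (fF_facts p hp hqX hqY x y).1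

lemma tsum_fF_eq (p : X → Y → ℝ) (hp : IsJointDist p) {qX : X → ℕ → ℝ} {qY : Y → ℕ → ℝ}
    (hqX : IsChannelNat qX) (hqY : IsChannelNat qY) (x : X) (y : Y) :
    ∑' s, fF p qX qY x y s
      = (∑' s, fA p qX qY x y s) + (∑' s, fB p qX qY x y s) - ∑' s, fC p qX qY x y s := by
  rw [tsum_congr (split_pt p hp hqX hqY x y)]
  rw [Summable.tsum_sub ((fA_facts p hp hqX hqY x y).1.add (fB_facts p hp hqX hqY x y).1)
    (fC_summable p hp hqX hqY x y),
    Summable.tsum_add (fA_facts p hp hqX hqY x y).1 (fB_facts p hp hqX hqY x y).1]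

lemma mi2_eq (p : X → Y → ℝ) (hp : IsJointDist p) {qX : X → ℕ → ℝ} {qY : Y → ℕ → ℝ}
    (hqX : IsChannelNat qX) (hqY : IsChannelNat qY) :
    mi2 (jointW p) (tens2 qX qY) = miXTX p qX + miYTY p qY - miTT p qX qY := by
  have hstep : mi2 (jointW p) (tens2 qX qY)
      = ∑ a : X × Y, ((∑' t, p a.1 a.2 * qX a.1 t * Real.log (qX a.1 t / margTX p qX t))
        + (∑' t, p a.1 a.2 * qY a.2 t * Real.log (qY a.2 t / margTY p qY t))
        - ∑' s, fC p qX qY a.1 a.2 s) := by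
    unfold mi2
    rw [push2_jointW]
    refine Finset.sum_congr rfl fun a _ => ?_
    have h0 : (fun s : ℕ × ℕ => jointW p a * tens2 qX qY a s *
        Real.log (tens2 qX qY a s / margTT p qX qY s)) = fF p qX qY a.1 a.2 := rfl
    rw [h0, tsum_fF_eq p hp hqX hqY a.1 a.2, (fA_facts p hp hqX hqY a.1 a.2).2,
      (fB_facts p hp hqX hqY a.1 a.2).2]
  rw [hstep, Finset.sum_sub_distrib, Finset.sum_add_distrib]
  have e1 : ∑ a : X × Y, ∑' t, p a.1 a.2 * qX a.1 t * Real.log (qX a.1 t / margTX p qX t)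
      = miXTX p qX := by
    rw [Fintype.sum_prod_type]
    unfold miXTX
    refine Finset.sum_congr rfl fun x _ => ?_
    have h1 : ∀ y : Y, (∑' t, p x y * qX x t * Real.log (qX x t / margTX p qX t))
        = p x y * ∑' t, qX x t * Real.log (qX x t / margTX p qX t) := by
      intro y
      rw [← tsum_mul_left]
      exact tsum_congr fun t => by ring
    rw [Finset.sum_congr rfl fun y _ => h1 y, ← Finset.sum_mul]
    have h2 : ∑' t, margX p x * qX x t * Real.log (qX x t / margTX p qX t)
        = margX p x * ∑' t, qX x t * Real.log (qX x t / margTX p qX t) := by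
      rw [← tsum_mul_left]
      exact tsum_congr fun t => by ring
    rw [h2]
    rfl
  have e2 : ∑ a : X × Y, ∑' t, p a.1 a.2 * qY a.2 t * Real.log (qY a.2 t / margTY p qY t)
      = miYTY p qY := by
    rw [Fintype.sum_prod_type, Finset.sum_comm]
    unfold miYTY
    refine Finset.sum_congr rfl fun y _ => ?_
    have h1 : ∀ x : X, (∑' t, p x y * qY y t * Real.log (qY y t / margTY p qY t))
        = p x y * ∑' t, qY y t * Real.log (qY y t / margTY p qY t) := by
      intro x
      rw [← tsum_mul_left]
      exact tsum_congr fun t => by ring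
    rw [Finset.sum_congr rfl fun x _ => h1 x, ← Finset.sum_mul]
    have h2 : ∑' t, margY p y * qY y t * Real.log (qY y t / margTY p qY t)
        = margY p y * ∑' t, qY y t * Real.log (qY y t / margTY p qY t) := by
      rw [← tsum_mul_left]
      exact tsum_congr fun t => by ring
    rw [h2]
    rfl
  have e3 : ∑ a : X × Y, ∑' s, fC p qX qY a.1 a.2 s = miTT p qX qY := by
    rw [Fintype.sum_prod_type]
    have hxy : ∀ x : X, ∑ y, ∑' s, fC p qX qY x y s = ∑' s, ∑ y, fC p qX qY x y s :=
      fun x => (Summable.tsum_finsetSum fun y _ => fC_summable p hp hqX hqY x y).symm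
    rw [Finset.sum_congr rfl fun x _ => hxy x,
      ← Summable.tsum_finsetSum fun x _ => summable_sum fun y _ => fC_summable p hp hqX hqY x y]
    unfold miTT
    refine tsum_congr fun s => ?_
    unfold fC margTT
    rw [Finset.sum_mul]
    exact Finset.sum_congr rfl fun x _ => by rw [Finset.sum_mul]
  rw [e1, e2, e3]

lemma mi2_nonneg (p : X → Y → ℝ) (hp : IsJointDist p) {qX : X → ℕ → ℝ} {qY : Y → ℕ → ℝ}
    (hqX : IsChannelNat qX) (hqY : IsChannelNat qY) :
    0 ≤ mi2 (jointW p) (tens2 qX qY) := by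
  unfold mi2
  rw [push2_jointW]
  refine Finset.sum_nonneg fun a _ => ?_
  exact (fF_facts p hp hqX hqY a.1 a.2).2

end SIBaux
namespace SIBaux
variable {X Y : Type} [Fintype X] [Fintype Y]

/-- Erasure-scaled channel: with probability `α` emit `t+1` where `t ~ q`, else emit `0`. -/
def scCh {A : Type} (α : ℝ) (q : A → ℕ → ℝ) (a : A) : ℕ → ℝ
  | 0 => 1 - α
  | n + 1 => α * q a n

lemma summable_scCh {A : Type} (α : ℝ) {q : A → ℕ → ℝ} (hq : IsChannelNat q) (a : A) :
    Summable (scCh α q a) := by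
  refine (summable_nat_add_iff 1).1 ?_
  have : (fun n => scCh α q a (n + 1)) = fun n => α * q a n := rfl
  rw [this]
  exact (chan_summable hq a).mul_left α

lemma isChannel_scCh {A : Type} {α : ℝ} (hα0 : 0 ≤ α) (hα1 : α ≤ 1) {q : A → ℕ → ℝ}
    (hq : IsChannelNat q) : IsChannelNat (scCh α q) := by
  constructor
  · intro a t
    cases t with
    | zero => simp [scCh]; linarith
    | succ n => exact mul_nonneg hα0 (hq.1 a n)
  · intro a
    rw [Summable.tsum_eq_zero_add (summable_scCh α hq a)]
    have : (fun n => scCh α q a (n + 1)) = fun n => α * q a n := rfl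
    rw [this, tsum_mul_left, hq.2 a]
    simp [scCh]

lemma margTX_scCh_zero (p : X → Y → ℝ) (hp : IsJointDist p) (α : ℝ) (qX : X → ℕ → ℝ) :
    margTX p (scCh α qX) 0 = 1 - α := by
  unfold margTX
  have h : ∀ x : X, margX p x * scCh α qX x 0 = margX p x * (1 - α) := fun x => rfl
  rw [Finset.sum_congr rfl fun x _ => h x, ← Finset.sum_mul, sum_margX p hp, one_mul]

lemma margTX_scCh_succ (p : X → Y → ℝ) (α : ℝ) (qX : X → ℕ → ℝ) (n : ℕ) :
    margTX p (scCh α qX) (n + 1) = α * margTX p qX n := by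
  unfold margTX
  rw [Finset.mul_sum]
  exact Finset.sum_congr rfl fun x _ => by show margX p x * (α * qX x n) = _; ring

lemma miXTX_scCh (p : X → Y → ℝ) (hp : IsJointDist p) {α : ℝ} (hα1 : α ≤ 1)
    (qX : X → ℕ → ℝ) : miXTX p (scCh α qX) = α * miXTX p qX := by
  unfold miXTX
  rw [Finset.mul_sum]
  refine Finset.sum_congr rfl fun x _ => ?_
  set h : ℕ → ℝ := fun t => margX p x * scCh α qX x t *
    Real.log (scCh α qX x t / margTX p (scCh α qX) t) with hhdef
  have h0 : h 0 = 0 := by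
    simp only [hhdef, scCh, margTX_scCh_zero p hp α qX]
    rcases eq_or_lt_of_le hα1 with h1 | h1
    · rw [← h1]; norm_num
    · rw [div_self (by linarith : (1:ℝ) - α ≠ 0), Real.log_one, mul_zero]
  have hsucc : ∀ n : ℕ, h (n + 1)
      = α * (margX p x * qX x n * Real.log (qX x n / margTX p qX n)) := by
    intro n
    simp only [hhdef, scCh, margTX_scCh_succ p α qX n]
    by_cases hα : α = 0
    · simp [hα]
    · rw [mul_div_mul_left _ _ hα]
      ring
  have hsupp : Function.support h ⊆ Set.range Nat.succ := by
    intro t ht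
    cases t with
    | zero => exact absurd h0 ht
    | succ n => exact ⟨n, rfl⟩
  have hinj := Function.Injective.tsum_eq (g := Nat.succ) Nat.succ_injective (f := h) hsupp
  rw [← hinj, tsum_congr (fun n => hsucc n), tsum_mul_left]

end SIBaux
namespace SIBaux
variable {X Y : Type} [Fintype X] [Fintype Y]

lemma margTT_scCh_zero (p : X → Y → ℝ) (α : ℝ) (qX : X → ℕ → ℝ) (qY : Y → ℕ → ℝ) (b : ℕ) :
    margTT p (scCh α qX) qY (0, b) = (1 - α) * margTY p qY b := by
  unfold margTT margTY margY
  rw [Finset.sum_comm, Finset.mul_sum]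
  refine Finset.sum_congr rfl fun y _ => ?_
  rw [Finset.sum_mul, Finset.mul_sum]
  refine Finset.sum_congr rfl fun x _ => ?_
  show p x y * (1 - α) * qY y b = (1 - α) * (p x y * qY y b)
  ring

lemma margTT_scCh_succ (p : X → Y → ℝ) (α : ℝ) (qX : X → ℕ → ℝ) (qY : Y → ℕ → ℝ)
    (n b : ℕ) : margTT p (scCh α qX) qY (n + 1, b) = α * margTT p qX qY (n, b) := by
  unfold margTT
  rw [Finset.mul_sum]
  refine Finset.sum_congr rfl fun x _ => ?_
  rw [Finset.mul_sum]
  refine Finset.sum_congr rfl fun y _ => ?_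
  show p x y * (α * qX x n) * qY y b = α * (p x y * qX x n * qY y b)
  ring

lemma miTT_scCh_left (p : X → Y → ℝ) (hp : IsJointDist p) (α : ℝ)
    (qX : X → ℕ → ℝ) (qY : Y → ℕ → ℝ) :
    miTT p (scCh α qX) qY = α * miTT p qX qY := by
  unfold miTT
  set G : ℕ × ℕ → ℝ := fun s => margTT p (scCh α qX) qY s *
    Real.log (margTT p (scCh α qX) qY s /
      (margTX p (scCh α qX) s.1 * margTY p qY s.2)) with hGdef
  have hinj : Function.Injective (fun s : ℕ × ℕ => ((s.1 + 1, s.2) : ℕ × ℕ)) := by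
    intro a b h
    simp only [Prod.mk.injEq, add_left_inj] at h
    exact Prod.ext h.1 h.2
  have hG0 : ∀ b : ℕ, G (0, b) = 0 := by
    intro b
    show margTT p (scCh α qX) qY (0, b) * Real.log (margTT p (scCh α qX) qY (0, b) /
      (margTX p (scCh α qX) 0 * margTY p qY b)) = 0
    rw [margTT_scCh_zero, margTX_scCh_zero p hp]
    by_cases h1 : (1 - α) * margTY p qY b = 0
    · rw [h1, zero_mul]
    · rw [div_self h1, Real.log_one, mul_zero]
  have hGsucc : ∀ a b : ℕ, G (a + 1, b) = α * (margTT p qX qY (a, b) *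
      Real.log (margTT p qX qY (a, b) / (margTX p qX a * margTY p qY b))) := by
    intro a b
    show margTT p (scCh α qX) qY (a + 1, b) * Real.log (margTT p (scCh α qX) qY (a + 1, b) /
      (margTX p (scCh α qX) (a + 1) * margTY p qY b)) = _
    rw [margTT_scCh_succ, margTX_scCh_succ]
    by_cases hα : α = 0
    · simp [hα]
    · rw [mul_assoc α (margTX p qX a) (margTY p qY b), mul_div_mul_left _ _ hα]
      ring
  have hsupp : Function.support G ⊆ Set.range (fun s : ℕ × ℕ => ((s.1 + 1, s.2) : ℕ × ℕ)) := by
    intro s hs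
    obtain ⟨a, b⟩ := s
    cases a with
    | zero => exact absurd (hG0 b) hs
    | succ n => exact ⟨(n, b), rfl⟩
  have hkey := Function.Injective.tsum_eq hinj (f := G) hsupp
  rw [← hkey, tsum_congr (fun s : ℕ × ℕ => hGsucc s.1 s.2), tsum_mul_left]

lemma miTT_scCh_right (p : X → Y → ℝ) (hp : IsJointDist p) (α : ℝ)
    (qX : X → ℕ → ℝ) (qY : Y → ℕ → ℝ) :
    miTT p qX (scCh α qY) = α * miTT p qX qY := by
  rw [← miTT_swap p qX (scCh α qY), miTT_scCh_left (fun y x => p x y) (jd_swap p hp) α qY qX,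
    miTT_swap]

lemma miYTY_scCh (p : X → Y → ℝ) (hp : IsJointDist p) {α : ℝ} (hα1 : α ≤ 1)
    (qY : Y → ℕ → ℝ) : miYTY p (scCh α qY) = α * miYTY p qY := by
  rw [← miXTX_swap, miXTX_scCh (fun y x => p x y) (jd_swap p hp) hα1 qY, miXTX_swap]

end SIBaux

open SIBaux in
/-- For every `0 ≤ λ ≤ I(X;Y)`, a split channel `κ = κ_X ⊗ κ_Y`
minimises `I_κ(X,Y;T)` over `C_sIB(X,Y)` subject to
`D(κ(p(X,Y)) ‖ κ(p(X)p(Y))) = λ`, if and only if the pair `(κ_X, κ_Y)` solves the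
Symmetric Information Bottleneck problem: minimise `I_q(X;T_X) + I_q(Y;T_Y)` over
pairs of channels subject to `I_q(T_X;T_Y) ≥ λ`, with joint distribution
`q(x,y,t_X,t_Y) = p(x,y) q(t_X|x) q(t_Y|y)`. -/
theorem sib_as_constrained_iib {X Y : Type} [Fintype X] [Fintype Y]
    (p : X → Y → ℝ) (hp : IsJointDist p)
    (lam : ℝ) (hlam0 : 0 ≤ lam) (hlam1 : lam ≤ miXY p)
    (κX : X → ℕ → ℝ) (κY : Y → ℕ → ℝ)
    (hκX : IsChannelNat κX) (hκY : IsChannelNat κY) :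
    (klNN (push2 (jointW p) (tens2 κX κY)) (push2 (splitW p) (tens2 κX κY)) = lam ∧
      ∀ (κX' : X → ℕ → ℝ) (κY' : Y → ℕ → ℝ), IsChannelNat κX' → IsChannelNat κY' →
        klNN (push2 (jointW p) (tens2 κX' κY')) (push2 (splitW p) (tens2 κX' κY')) = lam →
        mi2 (jointW p) (tens2 κX κY) ≤ mi2 (jointW p) (tens2 κX' κY')) ↔
    (lam ≤ miTT p κX κY ∧
      ∀ (κX' : X → ℕ → ℝ) (κY' : Y → ℕ → ℝ), IsChannelNat κX' → IsChannelNat κY' →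
        lam ≤ miTT p κX' κY' →
        miXTX p κX + miYTY p κY ≤ miXTX p κX' + miYTY p κY') := by
  constructor
  · rintro ⟨hklA, hminA⟩
    rw [kl_eq] at hklA
    refine ⟨le_of_eq hklA.symm, ?_⟩
    intro κX' κY' hX' hY' hfeas
    obtain ⟨α, hα0, hα1, hαeq⟩ : ∃ α : ℝ, 0 ≤ α ∧ α ≤ 1 ∧ α * miTT p κX' κY' = lam := by
      by_cases h : miTT p κX' κY' = 0
      · refine ⟨0, le_refl 0, zero_le_one, ?_⟩
        rw [zero_mul]
        have h2 : lam ≤ 0 := h ▸ hfeas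
        linarith
      · have hpos : 0 < miTT p κX' κY' := lt_of_le_of_ne (le_trans hlam0 hfeas) (Ne.symm h)
        exact ⟨lam / miTT p κX' κY', div_nonneg hlam0 hpos.le, (div_le_one hpos).2 hfeas,
          div_mul_cancel₀ lam h⟩
    have hch : IsChannelNat (scCh α κX') := isChannel_scCh hα0 hα1 hX'
    have hfeas2 : klNN (push2 (jointW p) (tens2 (scCh α κX') κY'))
        (push2 (splitW p) (tens2 (scCh α κX') κY')) = lam := by
      rw [kl_eq, miTT_scCh_left p hp α κX' κY']
      exact hαeq
    have hmin := hminA (scCh α κX') κY' hch hY' hfeas2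
    rw [mi2_eq p hp hκX hκY, mi2_eq p hp hch hY', miXTX_scCh p hp hα1 κX',
      miTT_scCh_left p hp α κX' κY', hklA, hαeq] at hmin
    have hXnn := miXTX_nonneg p hp hX'
    nlinarith [hmin, hXnn, hα1]
  · rintro ⟨hfeas, hminB⟩
    have hXnn := miXTX_nonneg p hp hκX
    have hYnn := miYTY_nonneg p hp hκY
    have hmiTT : miTT p κX κY = lam := by
      by_contra hne
      have hgt : lam < miTT p κX κY := lt_of_le_of_ne hfeas (Ne.symm hne)
      have hTTpos : 0 < miTT p κX κY := lt_of_le_of_lt hlam0 hgt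
      set α := lam / miTT p κX κY with hα
      have hα0 : 0 ≤ α := div_nonneg hlam0 hTTpos.le
      have hα1 : α < 1 := (div_lt_one hTTpos).2 hgt
      have hαmul : α * miTT p κX κY = lam := div_mul_cancel₀ lam (ne_of_gt hTTpos)
      have h1 := hminB (scCh α κX) κY (isChannel_scCh hα0 hα1.le hκX) hκY
        (by rw [miTT_scCh_left p hp α κX κY, hαmul])
      rw [miXTX_scCh p hp hα1.le κX] at h1
      have hX0 : miXTX p κX = 0 := by nlinarith [h1, hXnn, hα1]
      have h2 := hminB κX (scCh α κY) hκX (isChannel_scCh hα0 hα1.le hκY)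
        (by rw [miTT_scCh_right p hp α κX κY, hαmul])
      rw [miYTY_scCh p hp hα1.le κY] at h2
      have hY0 : miYTY p κY = 0 := by nlinarith [h2, hYnn, hα1]
      have h3 := mi2_nonneg p hp hκX hκY
      rw [mi2_eq p hp hκX hκY, hX0, hY0] at h3
      linarith
    refine ⟨by rw [kl_eq]; exact hmiTT, ?_⟩
    intro κX' κY' hX' hY' hkl'
    rw [kl_eq] at hkl'
    have hm := hminB κX' κY' hX' hY' (le_of_eq hkl'.symm)
    rw [mi2_eq p hp hκX hκY, mi2_eq p hp hX' hY', hmiTT, hkl']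
    linarith
end
end

section
/- Let q(x,y,t_X,t_Y) = p(x,y) q(t_X|x) q(t_Y|y) be a joint distribution on X×Y×T_X×T_Y satisfying the Markov chain T_X − X − Y − T_Y. Then I_q(X,Y;T_X,T_Y) = I_q(X;T_X) + I_q(Y;T_Y) − I_q(T_X;T_Y). -/
noncomputable section

/-!
Where the joint weight `q(x,y,t_X,t_Y)` is positive, the factorisation of the channel splits the
logarithm pointwise:
`log (q(t_X|x) q(t_Y|y) / q(t_X,t_Y)) = log (q(t_X|x) / q(t_X)) + log (q(t_Y|y) / q(t_Y))
  - log (q(t_X,t_Y) / (q(t_X) q(t_Y)))`.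
Summing against `q` and marginalising out the variables each term does not depend on gives the
identity. Since `T_X × T_Y` is countable, each rearrangement needs absolute summability; it comes
from the bound `|w a log (a / m)| ≤ w m + w a |log w|`, valid whenever `w a ≤ m`.
-/

open Real Finset

theorem abs_mul_mul_log_div_le {w a m : ℝ} (hw : 0 ≤ w) (ha : 0 ≤ a) (hle : w * a ≤ m) :
    |w * a * log (a / m)| ≤ w * m + w * a * |log w| := by
  have hwa : 0 ≤ w * a := mul_nonneg hw ha
  rcases hw.eq_or_lt with rfl | hw
  · simp
  rcases ha.eq_or_lt with rfl | ha
  · simp only [mul_zero, zero_mul, abs_zero, add_zero]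
    exact mul_nonneg hw.le (by simpa using hle)
  have hm : 0 < m := (mul_pos hw ha).trans_le hle
  have upper : log (a / m) ≤ |log w| :=
    calc log (a / m) ≤ log w⁻¹ := by
          gcongr
          rw [div_le_iff₀ hm, ← div_eq_inv_mul, le_div_iff₀ hw, mul_comm]
          exact hle
      _ ≤ |log w| := by rw [log_inv]; exact neg_le_abs _
  have lower : a - m ≤ a * log (a / m) :=
    calc a - m = a * (1 - (a / m)⁻¹) := by field_simp
      _ ≤ a * log (a / m) :=
          mul_le_mul_of_nonneg_left (one_sub_inv_le_log_of_pos (div_pos ha hm)) ha.le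
  have hlog : 0 ≤ w * a * |log w| := mul_nonneg hwa (abs_nonneg _)
  rw [abs_le, mul_assoc]
  constructor
  · nlinarith [mul_le_mul_of_nonneg_left lower hw.le]
  · nlinarith [mul_le_mul_of_nonneg_left (mul_le_mul_of_nonneg_left upper ha.le) hw.le]

theorem summable_mul_mul_log_div {ι : Type*} {w : ℝ} {a m : ι → ℝ} (hw : 0 ≤ w)
    (ha : ∀ i, 0 ≤ a i) (hle : ∀ i, w * a i ≤ m i) (hsa : Summable a) (hsm : Summable m) :
    Summable fun i => w * a i * log (a i / m i) :=
  .of_norm_bounded (g := fun i => w * m i + w * a i * |log w|)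
    ((hsm.mul_left w).add ((hsa.mul_left w).mul_right |log w|))
    fun i => by rw [Real.norm_eq_abs]; exact abs_mul_mul_log_div_le hw (ha i) (hle i)

theorem summable_prod_mul {ι κ : Type*} {f : ι → ℝ} {g : κ → ℝ} (hf : Summable f)
    (hg : Summable g) : Summable fun s : ι × κ => f s.1 * g s.2 :=
  summable_mul_of_summable_norm (summable_norm_iff.2 hf) (summable_norm_iff.2 hg)

theorem tsum_prod_mul {ι κ : Type*} {f : ι → ℝ} {g : κ → ℝ} (hf : Summable f)
    (hg : Summable g) : ∑' s : ι × κ, f s.1 * g s.2 = (∑' i, f i) * ∑' j, g j :=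
  (hf.tsum_mul_tsum hg (summable_prod_mul hf hg)).symm

theorem IsChannelNat.summable_s7 {A : Type} {κ : A → ℕ → ℝ} (hκ : IsChannelNat κ) (a : A) :
    Summable (κ a) := by
  by_contra h
  simpa [tsum_eq_zero_of_not_summable h] using hκ.2 a

/-- The joint weight `q(x, y, t_X, t_Y)`, with `s = (t_X, t_Y)`. -/
def jointQ {X Y : Type} (p : X → Y → ℝ) (qX : X → ℕ → ℝ) (qY : Y → ℕ → ℝ) (x : X) (y : Y)
    (s : ℕ × ℕ) : ℝ :=
  p x y * qX x s.1 * qY y s.2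

section SplitChannels

variable {X Y : Type} {p : X → Y → ℝ} {qX : X → ℕ → ℝ} {qY : Y → ℕ → ℝ}

theorem jointQ_nonneg (hp : ∀ x y, 0 ≤ p x y) (hqX : ∀ x t, 0 ≤ qX x t)
    (hqY : ∀ y t, 0 ≤ qY y t) (x : X) (y : Y) (s : ℕ × ℕ) : 0 ≤ jointQ p qX qY x y s :=
  mul_nonneg (mul_nonneg (hp x y) (hqX x s.1)) (hqY y s.2)

theorem summable_jointQ (hqX : IsChannelNat qX) (hqY : IsChannelNat qY) (x : X) (y : Y) :
    Summable (jointQ p qX qY x y) :=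
  ((summable_prod_mul (hqX.summable_s7 x) (hqY.summable_s7 y)).mul_left (p x y)).congr
    fun _ => (mul_assoc ..).symm

variable [Fintype Y]

theorem le_margX (hp : ∀ x y, 0 ≤ p x y) (x : X) (y : Y) : p x y ≤ margX p x :=
  single_le_sum (fun y _ => hp x y) (mem_univ y)

variable [Fintype X]

theorem margX_mul_le_margTX (hp : ∀ x y, 0 ≤ p x y) (hqX : ∀ x t, 0 ≤ qX x t) (x : X) (t : ℕ) :
    margX p x * qX x t ≤ margTX p qX t :=
  single_le_sum (f := fun x => margX p x * qX x t)
    (fun x _ => mul_nonneg (sum_nonneg fun y _ => hp x y) (hqX x t)) (mem_univ x)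

theorem mul_le_margTX (hp : ∀ x y, 0 ≤ p x y) (hqX : ∀ x t, 0 ≤ qX x t) (x : X) (y : Y)
    (t : ℕ) : p x y * qX x t ≤ margTX p qX t :=
  (mul_le_mul_of_nonneg_right (le_margX hp x y) (hqX x t)).trans (margX_mul_le_margTX hp hqX x t)

-- `margY p`, `margTY p` and `miYTY p` are `margX`, `margTX` and `miXTX` of `flip p` by
-- definition, so each `Y`-side fact is the `X`-side one for `flip p`.
theorem mul_le_margTY (hp : ∀ x y, 0 ≤ p x y) (hqY : ∀ y t, 0 ≤ qY y t) (x : X) (y : Y)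
    (t : ℕ) : p x y * qY y t ≤ margTY p qY t :=
  mul_le_margTX (p := flip p) (fun y x => hp x y) hqY y x t

theorem jointQ_le_margTT (hp : ∀ x y, 0 ≤ p x y) (hqX : ∀ x t, 0 ≤ qX x t)
    (hqY : ∀ y t, 0 ≤ qY y t) (x : X) (y : Y) (s : ℕ × ℕ) :
    jointQ p qX qY x y s ≤ margTT p qX qY s :=
  (single_le_sum (f := fun y => jointQ p qX qY x y s)
      (fun y _ => jointQ_nonneg hp hqX hqY x y s) (mem_univ y)).trans
    (single_le_sum (f := fun x => ∑ y, jointQ p qX qY x y s)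
      (fun x _ => sum_nonneg fun y _ => jointQ_nonneg hp hqX hqY x y s) (mem_univ x))

theorem push2_jointW_tens2 : push2 (jointW p) (tens2 qX qY) = margTT p qX qY := by
  funext s
  simp only [push2, jointW, tens2, margTT, Fintype.sum_prod_type, mul_assoc]

theorem summable_margTX (hqX : IsChannelNat qX) : Summable (margTX p qX) :=
  summable_sum fun x _ => (hqX.summable_s7 x).mul_left _

theorem summable_margTT (hqX : IsChannelNat qX) (hqY : IsChannelNat qY) :
    Summable (margTT p qX qY) :=
  summable_sum fun x _ => summable_sum fun y _ => summable_jointQ hqX hqY x y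

theorem summable_mul_log_div_margTX (hp : ∀ x y, 0 ≤ p x y) (hqX : IsChannelNat qX) (x : X)
    (y : Y) : Summable fun t => p x y * qX x t * log (qX x t / margTX p qX t) :=
  summable_mul_mul_log_div (hp x y) (hqX.1 x) (mul_le_margTX hp hqX.1 x y) (hqX.summable_s7 x)
    (summable_margTX hqX)

theorem summable_mul_log_div_margTY (hp : ∀ x y, 0 ≤ p x y) (hqY : IsChannelNat qY) (x : X)
    (y : Y) : Summable fun t => p x y * qY y t * log (qY y t / margTY p qY t) :=
  summable_mul_log_div_margTX (p := flip p) (fun y x => hp x y) hqY y x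

theorem summable_jointQ_mul_log_div_margTX (hp : ∀ x y, 0 ≤ p x y) (hqX : IsChannelNat qX)
    (hqY : IsChannelNat qY) (x : X) (y : Y) :
    Summable fun s => jointQ p qX qY x y s * log (qX x s.1 / margTX p qX s.1) :=
  (summable_prod_mul (summable_mul_log_div_margTX hp hqX x y) (hqY.summable_s7 y)).congr
    fun s => by simp only [jointQ]; ring

theorem summable_jointQ_mul_log_div_margTY (hp : ∀ x y, 0 ≤ p x y) (hqX : IsChannelNat qX)
    (hqY : IsChannelNat qY) (x : X) (y : Y) :
    Summable fun s => jointQ p qX qY x y s * log (qY y s.2 / margTY p qY s.2) :=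
  (summable_prod_mul (hqX.summable_s7 x) (summable_mul_log_div_margTY hp hqY x y)).congr
    fun s => by simp only [jointQ]; ring

theorem summable_jointQ_mul_log_div_margTT (hp : ∀ x y, 0 ≤ p x y) (hqX : IsChannelNat qX)
    (hqY : IsChannelNat qY) (x : X) (y : Y) :
    Summable fun s => jointQ p qX qY x y s * log (qX x s.1 * qY y s.2 / margTT p qX qY s) :=
  (summable_mul_mul_log_div (hp x y) (fun s => mul_nonneg (hqX.1 x s.1) (hqY.1 y s.2))
      (fun s => (mul_assoc (p x y) _ _).symm.trans_le (jointQ_le_margTT hp hqX.1 hqY.1 x y s))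
      (summable_prod_mul (hqX.summable_s7 x) (hqY.summable_s7 y)) (summable_margTT hqX hqY)).congr
    fun _ => by simp only [jointQ, mul_assoc]

theorem tsum_jointQ_mul_log_div_margTX (hp : ∀ x y, 0 ≤ p x y) (hqX : IsChannelNat qX)
    (hqY : IsChannelNat qY) (x : X) (y : Y) :
    ∑' s, jointQ p qX qY x y s * log (qX x s.1 / margTX p qX s.1) =
      ∑' t, p x y * qX x t * log (qX x t / margTX p qX t) := by
  calc _ = ∑' s : ℕ × ℕ, p x y * qX x s.1 * log (qX x s.1 / margTX p qX s.1) * qY y s.2 :=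
        tsum_congr fun s => by simp only [jointQ]; ring
    _ = _ := by
        rw [tsum_prod_mul (summable_mul_log_div_margTX hp hqX x y) (hqY.summable_s7 y), hqY.2 y,
          mul_one]

theorem tsum_jointQ_mul_log_div_margTY (hp : ∀ x y, 0 ≤ p x y) (hqX : IsChannelNat qX)
    (hqY : IsChannelNat qY) (x : X) (y : Y) :
    ∑' s, jointQ p qX qY x y s * log (qY y s.2 / margTY p qY s.2) =
      ∑' t, p x y * qY y t * log (qY y t / margTY p qY t) := by
  calc _ = ∑' s : ℕ × ℕ, qX x s.1 * (p x y * qY y s.2 * log (qY y s.2 / margTY p qY s.2)) :=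
        tsum_congr fun s => by simp only [jointQ]; ring
    _ = _ := by
        rw [tsum_prod_mul (hqX.summable_s7 x) (summable_mul_log_div_margTY hp hqY x y), hqX.2 x,
          one_mul]

theorem jointQ_mul_log_margTT_div (hp : ∀ x y, 0 ≤ p x y) (hqX : ∀ x t, 0 ≤ qX x t)
    (hqY : ∀ y t, 0 ≤ qY y t) (x : X) (y : Y) (s : ℕ × ℕ) :
    jointQ p qX qY x y s * log (margTT p qX qY s / (margTX p qX s.1 * margTY p qY s.2)) =
      jointQ p qX qY x y s * log (qX x s.1 / margTX p qX s.1)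
        + jointQ p qX qY x y s * log (qY y s.2 / margTY p qY s.2)
        - jointQ p qX qY x y s * log (qX x s.1 * qY y s.2 / margTT p qX qY s) := by
  rcases (jointQ_nonneg hp hqX hqY x y s).eq_or_lt with h0 | hpos
  · rw [← h0]; ring
  have hpqX : 0 < p x y * qX x s.1 := pos_of_mul_pos_left hpos (hqY y s.2)
  have hpqY : 0 < p x y * qY y s.2 := by
    have hp' := pos_of_mul_pos_left hpqX (hqX x s.1)
    exact mul_pos hp' (pos_of_mul_pos_right hpos hpqX.le)
  have hx : qX x s.1 ≠ 0 := (pos_of_mul_pos_right hpqX (hp x y)).ne'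
  have hy : qY y s.2 ≠ 0 := (pos_of_mul_pos_right hpqY (hp x y)).ne'
  have hMX : margTX p qX s.1 ≠ 0 := (hpqX.trans_le (mul_le_margTX hp hqX x y s.1)).ne'
  have hMY : margTY p qY s.2 ≠ 0 := (hpqY.trans_le (mul_le_margTY hp hqY x y s.2)).ne'
  have hM : margTT p qX qY s ≠ 0 := (hpos.trans_le (jointQ_le_margTT hp hqX hqY x y s)).ne'
  rw [log_div hM (mul_ne_zero hMX hMY), log_mul hMX hMY, log_div hx hMX, log_div hy hMY,
    log_div (mul_ne_zero hx hy) hM, log_mul hx hy]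
  ring

theorem summable_jointQ_mul_log_margTT_div (hp : ∀ x y, 0 ≤ p x y) (hqX : IsChannelNat qX)
    (hqY : IsChannelNat qY) (x : X) (y : Y) :
    Summable fun s => jointQ p qX qY x y s *
      log (margTT p qX qY s / (margTX p qX s.1 * margTY p qY s.2)) :=
  (((summable_jointQ_mul_log_div_margTX hp hqX hqY x y).add
      (summable_jointQ_mul_log_div_margTY hp hqX hqY x y)).sub
      (summable_jointQ_mul_log_div_margTT hp hqX hqY x y)).congr
    fun s => (jointQ_mul_log_margTT_div hp hqX.1 hqY.1 x y s).symm

theorem tsum_jointQ_mul_log_div_margTT (hp : ∀ x y, 0 ≤ p x y) (hqX : IsChannelNat qX)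
    (hqY : IsChannelNat qY) (x : X) (y : Y) :
    ∑' s, jointQ p qX qY x y s * log (qX x s.1 * qY y s.2 / margTT p qX qY s) =
      ∑' t, p x y * qX x t * log (qX x t / margTX p qX t)
        + ∑' t, p x y * qY y t * log (qY y t / margTY p qY t)
        - ∑' s, jointQ p qX qY x y s *
            log (margTT p qX qY s / (margTX p qX s.1 * margTY p qY s.2)) := by
  have hsX := summable_jointQ_mul_log_div_margTX hp hqX hqY x y
  have hsY := summable_jointQ_mul_log_div_margTY hp hqX hqY x y
  rw [← tsum_jointQ_mul_log_div_margTX hp hqX hqY x y,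
    ← tsum_jointQ_mul_log_div_margTY hp hqX hqY x y, ← hsX.tsum_add hsY,
    ← (hsX.add hsY).tsum_sub (summable_jointQ_mul_log_margTT_div hp hqX hqY x y)]
  exact tsum_congr fun s => by rw [jointQ_mul_log_margTT_div hp hqX.1 hqY.1 x y s]; ring

theorem mi2_jointW_tens2 :
    mi2 (jointW p) (tens2 qX qY) =
      ∑ x, ∑ y, ∑' s, jointQ p qX qY x y s * log (qX x s.1 * qY y s.2 / margTT p qX qY s) := by
  simp only [mi2, push2_jointW_tens2, Fintype.sum_prod_type, jointW, tens2, jointQ, mul_assoc]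

theorem miXTX_eq_sum (hp : ∀ x y, 0 ≤ p x y) (hqX : IsChannelNat qX) :
    miXTX p qX = ∑ x, ∑ y : Y, ∑' t, p x y * qX x t * log (qX x t / margTX p qX t) := by
  refine sum_congr rfl fun x _ => ?_
  rw [← Summable.tsum_finsetSum fun y _ => summable_mul_log_div_margTX hp hqX x y]
  simp only [margX, sum_mul]

theorem miYTY_eq_sum (hp : ∀ x y, 0 ≤ p x y) (hqY : IsChannelNat qY) :
    miYTY p qY = ∑ x, ∑ y, ∑' t, p x y * qY y t * log (qY y t / margTY p qY t) := by
  rw [sum_comm]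
  exact miXTX_eq_sum (p := flip p) (fun y x => hp x y) hqY

theorem miTT_eq_sum (hp : ∀ x y, 0 ≤ p x y) (hqX : IsChannelNat qX) (hqY : IsChannelNat qY) :
    miTT p qX qY = ∑ x, ∑ y, ∑' s, jointQ p qX qY x y s *
      log (margTT p qX qY s / (margTX p qX s.1 * margTY p qY s.2)) := by
  have hs := summable_jointQ_mul_log_margTT_div hp hqX hqY
  calc miTT p qX qY = ∑' s, ∑ x, ∑ y, jointQ p qX qY x y s *
        log (margTT p qX qY s / (margTX p qX s.1 * margTY p qY s.2)) :=
        tsum_congr fun s => by simp only [margTT, jointQ, sum_mul]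
    _ = _ := by
        rw [Summable.tsum_finsetSum fun x _ => summable_sum fun y _ => hs x y]
        exact sum_congr rfl fun x _ => Summable.tsum_finsetSum fun y _ => hs x y

end SplitChannels

/-- Let `q(x,y,t_X,t_Y) = p(x,y) q(t_X|x) q(t_Y|y)` be a joint
distribution on `X × Y × T_X × T_Y` (which, by this product form, satisfies the
Markov chain `T_X − X − Y − T_Y`). Then
`I_q(X,Y;T_X,T_Y) = I_q(X;T_X) + I_q(Y;T_Y) − I_q(T_X;T_Y)`. -/
theorem mi_chain_rule_split_channels {X Y : Type} [Fintype X] [Fintype Y]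
    (p : X → Y → ℝ) (hp : IsJointDist p)
    (qX : X → ℕ → ℝ) (qY : Y → ℕ → ℝ)
    (hqX : IsChannelNat qX) (hqY : IsChannelNat qY) :
    mi2 (jointW p) (tens2 qX qY) = miXTX p qX + miYTY p qY - miTT p qX qY := by
  rw [mi2_jointW_tens2, miXTX_eq_sum hp.1 hqX, miYTY_eq_sum hp.1 hqY,
    miTT_eq_sum hp.1 hqX hqY, ← sum_add_distrib, ← sum_sub_distrib]
  refine sum_congr rfl fun x _ => ?_
  rw [← sum_add_distrib, ← sum_sub_distrib]
  exact sum_congr rfl fun y _ => tsum_jointQ_mul_log_div_margTT hp.1 hqX hqY x y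
end
end
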